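/- arXiv:math/0202093 — 9 statements merged into one kernel-verified Lean document; each statement's English description precedes it below -/
import Mathlib

section
/- Let p > 2 be a real number. For all u ∈ [0,1], one has (1+u)/(1+u^p)^{1/p} ≥ 1 + (2^{1-1/p} − 1)·u. -/
/-!
Put `a = 2^(1 - 1/p)` and `b = 2^(1/p)`, so that `a * b = 2` and `1 ≤ a, b`. Minkowski's inequality
applied to `(1, u) = (1 - u, 0) + (u, u)` gives `(1 + u^p)^(1/p) ≤ 1 + (b - 1) u`, and it remains to
check `(1 + (a - 1) u) (1 + (b - 1) u) ≤ 1 + u`, which reduces to `(a + b - 3)(u - u²) ≤ 0`.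
-/

open Real

lemma one_add_rpow_rpow_inv_le {p u : ℝ} (hp : 1 ≤ p) (hu₀ : 0 ≤ u) (hu₁ : u ≤ 1) :
    (1 + u ^ p) ^ (1 / p) ≤ 1 + ((2:ℝ) ^ (1 / p) - 1) * u := by
  have hp₀ : p ≠ 0 := by positivity
  have rpow_rpow_inv {x : ℝ} (hx : 0 ≤ x) : (x ^ p) ^ (1 / p) = x := by
    rw [← rpow_mul hx, mul_one_div_cancel hp₀, rpow_one]
  have minkowski := Lp_add_le_of_nonneg Finset.univ (f := ![1 - u, 0]) (g := ![u, u]) hp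
    (by intro i _; fin_cases i <;> simp [hu₁]) (by intro i _; fin_cases i <;> simpa)
  simp only [Fin.sum_univ_two, Matrix.cons_val_zero, Matrix.cons_val_one, sub_add_cancel,
    zero_add, zero_rpow hp₀, add_zero, rpow_rpow_inv (sub_nonneg.2 hu₁)] at minkowski
  have hdiag : (u ^ p + u ^ p) ^ (1 / p) = 2 ^ (1 / p) * u := by
    rw [← two_mul, mul_rpow zero_le_two (rpow_nonneg hu₀ p), rpow_rpow_inv hu₀]
  rw [one_rpow, hdiag] at minkowski
  linarith

lemma mul_le_one_add_of_mul_eq_two {a b u : ℝ} (ha : 1 ≤ a) (hb : 1 ≤ b) (hab : a * b = 2)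
    (hu₀ : 0 ≤ u) (hu₁ : u ≤ 1) :
    (1 + (a - 1) * u) * (1 + (b - 1) * u) ≤ 1 + u := by
  have hsum : a + b ≤ 3 := by nlinarith [mul_nonneg (sub_nonneg.2 ha) (sub_nonneg.2 hb)]
  have hu : 0 ≤ u - u ^ 2 := by nlinarith
  nlinarith [mul_nonneg (sub_nonneg.2 hsum) hu]

theorem stmt_2 (p : ℝ) (hp : 2 < p) (u : ℝ) (hu : u ∈ Set.Icc (0:ℝ) 1) :
    (1 + u) / (1 + u ^ p) ^ (1 / p) ≥ 1 + ((2:ℝ) ^ (1 - 1 / p) - 1) * u := by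
  obtain ⟨hu₀, hu₁⟩ := hu
  have hinv : 1 / p ≤ 1 := by rw [div_le_one (by positivity)]; linarith
  set a : ℝ := 2 ^ (1 - 1 / p)
  set b : ℝ := 2 ^ (1 / p)
  have hab : a * b = 2 := by rw [← rpow_add zero_lt_two, sub_add_cancel, rpow_one]
  have ha : 1 ≤ a := one_le_rpow one_le_two (by linarith)
  have hb : 1 ≤ b := one_le_rpow one_le_two (by positivity)
  have hbu : 0 < 1 + (b - 1) * u := by nlinarith
  calc 1 + (a - 1) * u ≤ (1 + u) / (1 + (b - 1) * u) := by
        rw [le_div_iff₀ hbu]; exact mul_le_one_add_of_mul_eq_two ha hb hab hu₀ hu₁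
    _ ≤ (1 + u) / (1 + u ^ p) ^ (1 / p) :=
        div_le_div_of_nonneg_left (by linarith) (by positivity)
          (one_add_rpow_rpow_inv_le (by linarith) hu₀ hu₁)
end

section
/- Let p > 2 be a real number, let X be a real normed space, let n be a positive integer, and let x, y ∈ X satisfy ‖x‖^p = 1/n and ‖y‖^p ≤ 1. Define σ := ‖x−y‖^p/(‖x‖^p + ‖y‖^p) and α := (‖x‖^p + ‖y‖^p)/2, and suppose u ∈ [−1,1] satisfies σ = (1−u)^p/(1+|u|^p). Then |u| ≤ c₁·n^{−1/p}·α^{−1/p}, where c₁ := max(2^{1−1/p}, 1/(2 − 2^{1/p})). -/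
/-!
Let `φ = distRatio p`, i.e. `φ(u) = (1 - u)^p / (1 + |u|^p)`. It is strictly decreasing on
`[-1, 1]`: on `[0, 1]` trivially, and on `[-1, 0]` by a majorization inequality for the
strictly convex function `t ↦ t^p`. If `‖x‖ ≤ ‖y‖` and `s = ‖x‖ / ‖y‖`, the triangle
inequality places `σ = ‖x - y‖^p / (‖x‖^p + ‖y‖^p)` between `φ(s)` and `φ(-s)`, so
`σ = φ(u)` forces `|u| ≤ s`. Hence `|u| ≤ ‖x‖ / max ‖x‖ ‖y‖` in all cases, and the bound
follows from `‖x‖ = n^{-1/p}`, `max ‖x‖ ‖y‖ ≥ α^{1/p}` and `c₁ ≥ 1`.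
-/

open Real Set

theorem StrictConvexOn.map_add_map_lt {s : Set ℝ} {f : ℝ → ℝ} (hf : StrictConvexOn ℝ s f)
    {x₁ x₂ y₁ y₂ : ℝ} (hx₁ : x₁ ∈ s) (hx₂ : x₂ ∈ s) (h₂₁ : x₂ < y₁) (h₁₁ : y₁ < x₁)
    (hsum : y₁ + y₂ = x₁ + x₂) : f y₁ + f y₂ < f x₁ + f x₂ := by
  have hd : 0 < x₁ - x₂ := by linarith
  set t := (y₁ - x₂) / (x₁ - x₂)
  have ht₀ : 0 < t := div_pos (by linarith) hd
  have ht₁ : 0 < 1 - t := sub_pos.2 ((div_lt_one hd).2 (by linarith))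
  have hy₁ : t * x₁ + (1 - t) * x₂ = y₁ := by
    simp only [t]
    field_simp
    ring
  have hy₂ : (1 - t) * x₁ + t * x₂ = y₂ := by linear_combination -hsum - hy₁
  have h₁ := hf.2 hx₁ hx₂ (sub_pos.1 hd).ne' ht₀ ht₁ (add_sub_cancel t 1)
  have h₂ := hf.2 hx₁ hx₂ (sub_pos.1 hd).ne' ht₁ ht₀ (sub_add_cancel 1 t)
  simp only [smul_eq_mul, hy₁, hy₂] at h₁ h₂
  linarith

noncomputable def distRatio (p u : ℝ) : ℝ := (1 - u) ^ p / (1 + |u| ^ p)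

lemma strictAntiOn_distRatio_Icc_zero_one {p : ℝ} (hp : 0 < p) :
    StrictAntiOn (distRatio p) (Icc 0 1) := by
  rintro u ⟨hu₀, -⟩ v ⟨hv₀, hv₁⟩ huv
  simp only [distRatio, abs_of_nonneg hu₀, abs_of_nonneg hv₀]
  calc (1 - v) ^ p / (1 + v ^ p) ≤ (1 - v) ^ p / (1 + u ^ p) := by gcongr
    _ < (1 - u) ^ p / (1 + u ^ p) := by gcongr

lemma strictAntiOn_distRatio_Icc_neg_one_zero {p : ℝ} (hp : 1 < p) :
    StrictAntiOn (distRatio p) (Icc (-1) 0) := by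
  rintro u ⟨hu₁, hu₀⟩ v ⟨-, hv₀⟩ huv
  -- Majorization of `(1 - u, (1 - u)(-v))` over `(1 - v, (1 - v)(-u))`.
  have key := (strictConvexOn_rpow hp).map_add_map_lt (x₁ := 1 - u) (x₂ := (1 - u) * -v)
    (y₁ := 1 - v) (y₂ := (1 - v) * -u) (mem_Ici.2 (by linarith)) (mem_Ici.2 (by nlinarith))
    (by nlinarith) (by linarith) (by ring)
  rw [mul_rpow (by linarith) (by linarith), mul_rpow (by linarith) (by linarith)] at key
  simp only [distRatio, abs_of_nonpos hu₀, abs_of_nonpos hv₀]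
  rw [div_lt_div_iff₀ (by have := rpow_nonneg (neg_nonneg.2 hv₀) p; linarith)
    (by have := rpow_nonneg (neg_nonneg.2 hu₀) p; linarith)]
  linarith

lemma strictAntiOn_distRatio {p : ℝ} (hp : 1 < p) : StrictAntiOn (distRatio p) (Icc (-1) 1) := by
  rw [← Icc_union_Icc_eq_Icc (by norm_num : (-1 : ℝ) ≤ 0) zero_le_one]
  exact (strictAntiOn_distRatio_Icc_neg_one_zero hp).union
    (strictAntiOn_distRatio_Icc_zero_one (by linarith)) (isGreatest_Icc (by norm_num))
    (isLeast_Icc zero_le_one)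

lemma rpow_div_rpow_add_rpow {p a b d : ℝ} (ha : 0 ≤ a) (hb : 0 < b) (hd : 0 ≤ d) :
    d ^ p / (a ^ p + b ^ p) = (d / b) ^ p / (1 + (a / b) ^ p) := by
  have := rpow_pos_of_pos hb p
  rw [div_rpow hd hb.le, div_rpow ha hb.le]
  field_simp
  ring

lemma abs_le_div_of_rpow_div_eq_distRatio {p a b d u : ℝ} (hp : 1 < p) (ha : 0 ≤ a)
    (hab : a ≤ b) (hb : 0 < b) (hd₁ : b - a ≤ d) (hd₂ : d ≤ a + b) (hu : u ∈ Icc (-1) 1)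
    (h : d ^ p / (a ^ p + b ^ p) = distRatio p u) : |u| ≤ a / b := by
  have hs₀ : 0 ≤ a / b := div_nonneg ha hb.le
  have hs₁ : a / b ≤ 1 := (div_le_one hb).2 hab
  have hd₀ : 0 ≤ d := by linarith
  rw [rpow_div_rpow_add_rpow ha hb (by linarith)] at h
  have hlow : distRatio p (a / b) ≤ distRatio p u := by
    rw [← h, distRatio, abs_of_nonneg hs₀]
    gcongr
    rw [one_sub_div hb.ne']
    gcongr
  have hup : distRatio p u ≤ distRatio p (-(a / b)) := by
    rw [← h, distRatio, abs_neg, abs_of_nonneg hs₀, sub_neg_eq_add]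
    gcongr
    rw [one_add_div hb.ne', add_comm b]
    gcongr
  have hanti := strictAntiOn_distRatio hp
  exact abs_le.2 ⟨(hanti.le_iff_ge hu ⟨by linarith, by linarith⟩).1 hup,
    (hanti.le_iff_ge ⟨by linarith, hs₁⟩ hu).1 hlow⟩

lemma abs_le_norm_div_max_norm {X : Type*} [SeminormedAddCommGroup X] {p u : ℝ} (hp : 1 < p)
    {x y : X} (hx : 0 < ‖x‖) (hu : u ∈ Icc (-1) 1)
    (h : ‖x - y‖ ^ p / (‖x‖ ^ p + ‖y‖ ^ p) = distRatio p u) : |u| ≤ ‖x‖ / max ‖x‖ ‖y‖ := by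
  rcases le_total ‖y‖ ‖x‖ with hyx | hxy
  · rw [max_eq_left hyx, div_self hx.ne']
    exact abs_le.2 hu
  · rw [max_eq_right hxy]
    exact abs_le_div_of_rpow_div_eq_distRatio hp (norm_nonneg x) hxy (hx.trans_le hxy)
      ((norm_sub_norm_le y x).trans_eq (norm_sub_rev y x)) (norm_sub_le x y) hu h

lemma inv_max_le_rpow_neg_inv {p a b : ℝ} (hp : 0 < p) (ha : 0 < a) (hb : 0 ≤ b) :
    (max a b)⁻¹ ≤ ((a ^ p + b ^ p) / 2) ^ (-(1 / p)) := by
  have hm : 0 < max a b := lt_max_of_lt_left ha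
  have hmean : (a ^ p + b ^ p) / 2 ≤ max a b ^ p := by
    have := rpow_le_rpow ha.le (le_max_left a b) hp.le
    have := rpow_le_rpow hb (le_max_right a b) hp.le
    linarith
  calc (max a b)⁻¹ = (max a b ^ p) ^ (-(1 / p)) := by
        rw [← rpow_mul hm.le, mul_neg, mul_one_div_cancel hp.ne', rpow_neg_one]
    _ ≤ ((a ^ p + b ^ p) / 2) ^ (-(1 / p)) :=
        rpow_le_rpow_of_nonpos (by positivity) hmean (by simp [hp.le])

theorem stmt_3_general (p : ℝ) (hp : 2 < p) {X : Type*} [NormedAddCommGroup X]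
    (n : ℕ) (hn : 0 < n) (x y : X)
    (hx : ‖x‖ ^ p = 1 / (n : ℝ))
    (u : ℝ) (hu : u ∈ Set.Icc (-1 : ℝ) 1)
    (hσ : ‖x - y‖ ^ p / (‖x‖ ^ p + ‖y‖ ^ p) = (1 - u) ^ p / (1 + |u| ^ p)) :
    |u| ≤ max ((2:ℝ) ^ (1 - 1 / p)) (1 / (2 - (2:ℝ) ^ (1 / p))) *
        (n : ℝ) ^ (-(1 / p)) * ((‖x‖ ^ p + ‖y‖ ^ p) / 2) ^ (-(1 / p)) := by
  have hp₀ : 0 < p := by linarith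
  have hnx : (n : ℝ) ^ (-(1 / p)) = ‖x‖ := by
    rw [rpow_neg n.cast_nonneg, ← inv_rpow n.cast_nonneg, ← one_div, ← hx,
      ← rpow_mul (norm_nonneg x), mul_one_div_cancel hp₀.ne', rpow_one]
  have hx₀ : 0 < ‖x‖ := by
    rw [← hnx]
    positivity
  have hc : 1 ≤ max ((2:ℝ) ^ (1 - 1 / p)) (1 / (2 - (2:ℝ) ^ (1 / p))) :=
    le_max_of_le_left (one_le_rpow one_le_two (by rw [sub_nonneg, div_le_one hp₀]; linarith))
  rw [hnx]
  calc |u| ≤ ‖x‖ / max ‖x‖ ‖y‖ := abs_le_norm_div_max_norm (by linarith) hx₀ hu hσ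
    _ = 1 * ‖x‖ * (max ‖x‖ ‖y‖)⁻¹ := by ring
    _ ≤ _ := by
        gcongr
        exact inv_max_le_rpow_neg_inv hp₀ hx₀ (norm_nonneg y)

theorem stmt_3 (p : ℝ) (hp : 2 < p) {X : Type*} [NormedAddCommGroup X] [NormedSpace ℝ X]
    (n : ℕ) (hn : 0 < n) (x y : X)
    (hx : ‖x‖ ^ p = 1 / (n : ℝ)) (hy : ‖y‖ ^ p ≤ 1)
    (u : ℝ) (hu : u ∈ Set.Icc (-1 : ℝ) 1)
    (hσ : ‖x - y‖ ^ p / (‖x‖ ^ p + ‖y‖ ^ p) = (1 - u) ^ p / (1 + |u| ^ p)) :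
    |u| ≤ max ((2:ℝ) ^ (1 - 1 / p)) (1 / (2 - (2:ℝ) ^ (1 / p))) *
        (n : ℝ) ^ (-(1 / p)) * ((‖x‖ ^ p + ‖y‖ ^ p) / 2) ^ (-(1 / p)) :=
  stmt_3_general p hp n hn x y hx u hu hσ
end

section
/- Let p > 2 be a real number. For all u ∈ [0,1], one has ((1+u)^p + (1−u)^p)/(2(1+u^p)) ≥ 1 + (2^{p−2} − 1)·u^p. -/
/-!
Put `X = u ^ p`. Since `((1 + u) ^ p + (1 - u) ^ p) / 2 ≥ 1 + (2 ^ (p - 1) - 1) X`, and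
`(1 + X) (1 + (2 ^ (p - 2) - 1) X) = 1 + (2 ^ (p - 1) - 1) X - (2 ^ (p - 2) - 1) X (1 - X)`,
the claim follows because `0 ≤ X ≤ 1`. The first inequality is homogeneous: with `t = 1 / u ≥ 1`
it says `G t ≥ G 1` for `G t = (t + 1) ^ p + (t - 1) ^ p - 2 t ^ p`, and `G` is nondecreasing on
`[1, ∞)` because `G' t = p ((t + 1) ^ (p - 1) + (t - 1) ^ (p - 1) - 2 t ^ (p - 1)) ≥ 0` by
convexity of `x ↦ x ^ (p - 1)`.
-/

open Set Real

lemma monotoneOn_rpow_add_one_add_rpow_sub_one_sub_two_mul_rpow {p : ℝ} (hp : 2 ≤ p) :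
    MonotoneOn (fun t : ℝ ↦ (t + 1) ^ p + (t - 1) ^ p - 2 * t ^ p) (Ici 1) := by
  have hp0 : 0 ≤ p := by linarith
  refine monotoneOn_of_hasDerivWithinAt_nonneg (f' := fun t ↦
      p * (t + 1) ^ (p - 1) + p * (t - 1) ^ (p - 1) - 2 * (p * t ^ (p - 1)))
    (convex_Ici 1) ?_ (fun t ht ↦ ?_) (fun t ht ↦ ?_)
  · exact ((continuousOn_id.add continuousOn_const).rpow_const fun _ _ ↦ Or.inr hp0).add
      ((continuousOn_id.sub continuousOn_const).rpow_const fun _ _ ↦ Or.inr hp0) |>.sub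
      (continuousOn_const.mul (continuousOn_id.rpow_const fun _ _ ↦ Or.inr hp0))
  all_goals
    rw [interior_Ici, mem_Ioi] at ht
  · refine HasDerivAt.hasDerivWithinAt ?_
    have h₁ := ((hasDerivAt_id t).add_const 1).rpow_const (p := p) (Or.inl (by simp; linarith))
    have h₂ := ((hasDerivAt_id t).sub_const 1).rpow_const (p := p) (Or.inl (by simp; linarith))
    have h₃ := (hasDerivAt_id t).rpow_const (p := p) (Or.inl (by simp; linarith))
    exact ((h₁.add h₂).sub (h₃.const_mul 2)).congr_deriv (by simp)
  · have hmid : t ^ (p - 1) ≤ 2⁻¹ * (t - 1) ^ (p - 1) + 2⁻¹ * (t + 1) ^ (p - 1) := by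
      have := (convexOn_rpow (p := p - 1) (by linarith)).2
        (show t - 1 ∈ Ici (0 : ℝ) by simp only [mem_Ici]; linarith)
        (show t + 1 ∈ Ici (0 : ℝ) by simp only [mem_Ici]; linarith)
        (by norm_num : (0 : ℝ) ≤ 2⁻¹) (by norm_num : (0 : ℝ) ≤ 2⁻¹) (by norm_num)
      simp only [smul_eq_mul] at this
      rwa [show 2⁻¹ * (t - 1) + 2⁻¹ * (t + 1) = t by ring] at this
    nlinarith

lemma two_add_mul_rpow_le_one_add_rpow_add_one_sub_rpow {p u : ℝ} (hp : 2 ≤ p)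
    (hu₀ : 0 ≤ u) (hu₁ : u ≤ 1) :
    2 + ((2 : ℝ) ^ p - 2) * u ^ p ≤ (1 + u) ^ p + (1 - u) ^ p := by
  have hp₀ : p ≠ 0 := by linarith
  rcases hu₀.eq_or_lt with rfl | hu
  · norm_num [zero_rpow hp₀]
  have ht : 1 ≤ 1 / u := by rw [le_div_iff₀ hu]; linarith
  have hG := monotoneOn_rpow_add_one_add_rpow_sub_one_sub_two_mul_rpow hp self_mem_Ici ht ht
  simp only [one_add_one_eq_two, sub_self, zero_rpow hp₀, one_rpow] at hG
  have hscale : ∀ c : ℝ, 0 ≤ c → u ^ p * c ^ p = (u * c) ^ p := fun c hc ↦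
    (mul_rpow hu₀ hc).symm
  have h₁ := hscale (1 / u + 1) (by positivity)
  have h₂ := hscale (1 / u - 1) (sub_nonneg.2 ht)
  have h₃ := hscale (1 / u) (by positivity)
  rw [show u * (1 / u + 1) = 1 + u by field_simp] at h₁
  rw [show u * (1 / u - 1) = 1 - u by field_simp] at h₂
  rw [mul_one_div_cancel hu.ne', one_rpow] at h₃
  nlinarith [rpow_nonneg hu₀ p]

theorem stmt_5 (p : ℝ) (hp : 2 < p) (u : ℝ) (hu : u ∈ Set.Icc (0:ℝ) 1) :
    ((1 + u) ^ p + (1 - u) ^ p) / (2 * (1 + u ^ p)) ≥ 1 + ((2:ℝ) ^ (p - 2) - 1) * u ^ p := by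
  obtain ⟨hu₀, hu₁⟩ := hu
  have hkey := two_add_mul_rpow_le_one_add_rpow_add_one_sub_rpow hp.le hu₀ hu₁
  have hX₀ : 0 ≤ u ^ p := rpow_nonneg hu₀ p
  have hX₁ : u ^ p ≤ 1 := rpow_le_one hu₀ hu₁ (by linarith)
  have hA : 1 ≤ (2 : ℝ) ^ (p - 2) := one_le_rpow (by norm_num) (by linarith)
  have h2p : (2 : ℝ) ^ p = 4 * 2 ^ (p - 2) := by
    rw [rpow_sub two_pos, rpow_two]; ring
  rw [ge_iff_le, le_div_iff₀ (by positivity)]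
  nlinarith [mul_nonneg (sub_nonneg.2 hA) (mul_nonneg hX₀ (sub_nonneg.2 hX₁))]
end

section
/- Let p > 2 be a real number. There exists a positive integer n₁ such that for all n > n₁ the following holds: for all real numbers α_1,…,α_n with 1/(2n) ≤ α_i ≤ (n+1)/(2n) for all i and ∑_{i=1}^n α_i = 1, and all u_1,…,u_n ∈ [0,1] with u_i ≤ c₁·n^{−1/p}·α_i^{−1/p} for all i, if the number of indices i with u_i > 1/2 is strictly greater than n/2, then φ(u_1,…,u_n) > 1. -/
/-! Split each inner sum as `M + S(ε)`: `M = ∑ αᵢ E(uᵢ)` collects the even parts `E` of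
`(1 ± uᵢ) ^ p / (1 + uᵢ ^ p)` and `S(ε) = ∑ ±αᵢ O(uᵢ)` is a Rademacher sum of the odd parts `O`.
A second-order Bernoulli inequality gives `E(u) ≥ 1 + (p - 2) u² / 4`, so more than `n / 2` indices
with `uᵢ > 1/2` push `M` up to `1 + θ`, `θ = (p - 2) / 64`. The bound on `uᵢ` gives
`αᵢ uᵢ ≤ c₁ n^(-1/p)`, so `S` has variance `O(n^(-1/p))`. By Chebyshev, all but a vanishing
fraction of the signs satisfy `M + S(ε) > 1 + θ / 2`, and there the `p`-th root is bounded away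
above `1`. -/

/-- The function φ: the average over all sign choices ε ∈ {−1,+1}ⁿ (encoded by
`ε : Fin n → Bool`, with `true ↦ +1`, `false ↦ −1`) of
`(∑ i, α i * (1 + ε i * u i) ^ p / (1 + u i ^ p)) ^ (1/p)`. -/
noncomputable def phi (p : ℝ) {n : ℕ} (α u : Fin n → ℝ) : ℝ :=
  (2:ℝ) ^ (-(n : ℝ)) * ∑ ε : Fin n → Bool,
    (∑ i, α i * (1 + (if ε i then (1:ℝ) else -1) * u i) ^ p / (1 + u i ^ p)) ^ (1 / p)

open Real Finset Filter Topology

namespace Real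

theorem one_add_mul_add_mul_sq_le_rpow {p u : ℝ} (hp : 2 ≤ p) (hu : -1 ≤ u) :
    1 + p * u + p / 2 * u ^ 2 ≤ (1 + u) ^ p := by
  have hsq : (1 + (2 * u + u ^ 2)) ^ (p / 2) = (1 + u) ^ p := by
    rw [show 1 + (2 * u + u ^ 2) = (1 + u) ^ (2 : ℝ) by norm_cast; ring,
      ← rpow_mul (by linarith)]
    ring_nf
  calc 1 + p * u + p / 2 * u ^ 2 = 1 + p / 2 * (2 * u + u ^ 2) := by ring
    _ ≤ (1 + (2 * u + u ^ 2)) ^ (p / 2) :=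
      one_add_mul_self_le_rpow_one_add (by nlinarith) (by linarith)
    _ = (1 + u) ^ p := hsq

theorem one_add_rpow_le_one_add_mul {p u : ℝ} (hp : 1 ≤ p) (hu₀ : 0 ≤ u) (hu₁ : u ≤ 1) :
    (1 + u) ^ p ≤ 1 + (2 ^ p - 1) * u := by
  have h := (convexOn_rpow hp).2 (Set.mem_Ici.2 zero_le_one) (Set.mem_Ici.2 zero_le_two)
    (sub_nonneg.2 hu₁) hu₀ (sub_add_cancel 1 u)
  simp only [smul_eq_mul, one_rpow] at h
  rw [show (1 - u) * 1 + u * 2 = 1 + u by ring] at h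
  linarith

end Real

noncomputable def evenPart (p u : ℝ) : ℝ := ((1 + u) ^ p + (1 - u) ^ p) / (2 * (1 + u ^ p))

noncomputable def oddPart (p u : ℝ) : ℝ := ((1 + u) ^ p - (1 - u) ^ p) / (2 * (1 + u ^ p))

theorem one_add_mul_sq_le_evenPart {p u : ℝ} (hp : 2 ≤ p) (hu₀ : 0 ≤ u) (hu₁ : u ≤ 1) :
    1 + (p - 2) * u ^ 2 / 4 ≤ evenPart p u := by
  have hpow : u ^ p ≤ u ^ 2 := by
    simpa using rpow_le_rpow_of_exponent_ge' hu₀ hu₁ zero_le_two hp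
  have hpow₀ : 0 ≤ u ^ p := rpow_nonneg hu₀ p
  have hplus := one_add_mul_add_mul_sq_le_rpow hp (by linarith : -1 ≤ u)
  have hminus := one_add_mul_add_mul_sq_le_rpow hp (by linarith : -1 ≤ -u)
  rw [← sub_eq_add_neg] at hminus
  rw [evenPart, le_div_iff₀ (by positivity)]
  nlinarith [mul_le_mul_of_nonneg_left (hpow.trans (by nlinarith : u ^ 2 ≤ 1))
    (by nlinarith : 0 ≤ (p - 2) * u ^ 2)]

theorem oddPart_nonneg {p u : ℝ} (hp : 0 ≤ p) (hu₀ : 0 ≤ u) (hu₁ : u ≤ 1) :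
    0 ≤ oddPart p u := by
  have hmono := rpow_le_rpow (by linarith) (by linarith : 1 - u ≤ 1 + u) hp
  have hpow₀ := rpow_nonneg hu₀ p
  exact div_nonneg (by linarith) (by linarith)

theorem oddPart_le {p u : ℝ} (hp : 2 ≤ p) (hu₀ : 0 ≤ u) (hu₁ : u ≤ 1) :
    oddPart p u ≤ (2 ^ p - 1 + p) * u := by
  have hplus := one_add_rpow_le_one_add_mul (by linarith : 1 ≤ p) hu₀ hu₁
  have hminus := one_add_mul_self_le_rpow_one_add (by linarith : -1 ≤ -u) (by linarith : 1 ≤ p)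
  have hpow₀ : 0 ≤ u ^ p := rpow_nonneg hu₀ p
  have hK : 0 ≤ (2 ^ p - 1 + p) * u :=
    mul_nonneg (by linarith [one_le_rpow one_le_two (by linarith : 0 ≤ p)]) hu₀
  rw [← sub_eq_add_neg] at hminus
  rw [oddPart, div_le_iff₀ (by positivity)]
  nlinarith [mul_nonneg hK hpow₀]

noncomputable def boolSign (b : Bool) : ℝ := if b then 1 else -1

theorem boolSign_mul_self (b : Bool) : boolSign b * boolSign b = 1 := by
  cases b <;> norm_num [boolSign]

theorem evenPart_add_boolSign_mul_oddPart (p u : ℝ) (b : Bool) :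
    evenPart p u + boolSign b * oddPart p u = (1 + boolSign b * u) ^ p / (1 + u ^ p) := by
  have h2 : (2 : ℝ) ≠ 0 := two_ne_zero
  cases b
  · rw [evenPart, oddPart, boolSign, if_neg Bool.false_ne_true, neg_one_mul, ← sub_eq_add_neg,
      div_sub_div_same, neg_one_mul, ← sub_eq_add_neg,
      show (1 + u) ^ p + (1 - u) ^ p - ((1 + u) ^ p - (1 - u) ^ p) = 2 * (1 - u) ^ p by ring,
      mul_div_mul_left _ _ h2]
  · rw [evenPart, oddPart, boolSign, if_pos rfl, one_mul, ← add_div, one_mul,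
      show (1 + u) ^ p + (1 - u) ^ p + ((1 + u) ^ p - (1 - u) ^ p) = 2 * (1 + u) ^ p by ring,
      mul_div_mul_left _ _ h2]

theorem evenPart_add_boolSign_mul_oddPart_nonneg {p u : ℝ} (hu₀ : 0 ≤ u) (hu₁ : u ≤ 1)
    (b : Bool) : 0 ≤ evenPart p u + boolSign b * oddPart p u := by
  rw [evenPart_add_boolSign_mul_oddPart]
  have : -1 ≤ boolSign b * u := by cases b <;> simp [boolSign] <;> linarith
  have := rpow_nonneg hu₀ p
  exact div_nonneg (rpow_nonneg (by linarith) _) (by linarith)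

-- A pointwise Chebyshev bound: the left side is nonpositive as soon as `S ≤ -θ / 2`.
theorem rpow_mul_one_sub_le_rpow_add {r M θ S : ℝ} (hr : 0 ≤ r) (hθ : 0 < θ) (hM : 1 + θ ≤ M)
    (hF : 0 ≤ M + S) : (1 + θ / 2) ^ r * (1 - 4 * S ^ 2 / θ ^ 2) ≤ (M + S) ^ r := by
  have hL : 0 ≤ (1 + θ / 2) ^ r := rpow_nonneg (by linarith) r
  by_cases hS : S ≤ -(θ / 2)
  · have : 1 ≤ 4 * S ^ 2 / θ ^ 2 := by
      rw [le_div_iff₀ (by positivity)]; nlinarith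
    exact (mul_nonpos_of_nonneg_of_nonpos hL (by linarith)).trans (rpow_nonneg hF r)
  · calc (1 + θ / 2) ^ r * (1 - 4 * S ^ 2 / θ ^ 2) ≤ (1 + θ / 2) ^ r :=
          mul_le_of_le_one_right hL (by linarith [show 0 ≤ 4 * S ^ 2 / θ ^ 2 by positivity])
      _ ≤ (M + S) ^ r := rpow_le_rpow (by linarith) (by linarith) hr

section Signs

variable {ι : Type*} [Fintype ι] [DecidableEq ι]

noncomputable def signedSum (a : ι → ℝ) (ε : ι → Bool) : ℝ := ∑ i, boolSign (ε i) * a i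

theorem sum_boolSign_mul_boolSign_of_ne {i j : ι} (hij : i ≠ j) :
    ∑ ε : ι → Bool, boolSign (ε i) * boolSign (ε j) = 0 := by
  set flip : (ι → Bool) → ι → Bool := fun ε => Function.update ε i (!ε i)
  have hflip : Function.Involutive flip := fun ε => by
    ext k; by_cases hk : k = i <;> simp [flip, hk]
  have hodd : ∀ ε, boolSign (flip ε i) * boolSign (flip ε j) =
      -(boolSign (ε i) * boolSign (ε j)) := by
    intro ε
    simp only [flip, Function.update_self, Function.update_of_ne hij.symm]
    cases ε i <;> cases ε j <;> simp [boolSign]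
  have := hflip.bijective.sum_comp fun ε => boolSign (ε i) * boolSign (ε j)
  simp only [hodd, sum_neg_distrib] at this
  linarith

theorem sum_signedSum_sq (a : ι → ℝ) :
    ∑ ε : ι → Bool, signedSum a ε ^ 2 = 2 ^ Fintype.card ι * ∑ i, a i ^ 2 := by
  have hpair : ∀ i j, ∑ ε : ι → Bool, boolSign (ε i) * boolSign (ε j) =
      if i = j then 2 ^ Fintype.card ι else 0 := by
    intro i j
    split_ifs with hij
    · simp [hij, boolSign_mul_self]
    · exact sum_boolSign_mul_boolSign_of_ne hij
  calc ∑ ε : ι → Bool, signedSum a ε ^ 2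
      = ∑ ε : ι → Bool, ∑ i, ∑ j, a i * a j * (boolSign (ε i) * boolSign (ε j)) := by
        refine sum_congr rfl fun ε _ => ?_
        rw [signedSum, sq, sum_mul_sum]
        exact sum_congr rfl fun i _ => sum_congr rfl fun j _ => by ring
    _ = ∑ i, ∑ j, a i * a j * ∑ ε : ι → Bool, boolSign (ε i) * boolSign (ε j) := by
        rw [sum_comm]
        refine sum_congr rfl fun i _ => ?_
        rw [sum_comm]
        simp only [mul_sum]
    _ = 2 ^ Fintype.card ι * ∑ i, a i ^ 2 := by
        simp only [hpair, mul_ite, mul_zero, sum_ite_eq, mem_univ, if_true, mul_sum]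
        exact sum_congr rfl fun i _ => by ring

theorem mul_rpow_le_sum_rpow_add_signedSum {r M θ : ℝ} (hr : 0 ≤ r) (hθ : 0 < θ) (hM : 1 + θ ≤ M)
    (a : ι → ℝ) (hF : ∀ ε, 0 ≤ M + signedSum a ε) :
    2 ^ Fintype.card ι * ((1 + θ / 2) ^ r * (1 - 4 * (∑ i, a i ^ 2) / θ ^ 2)) ≤
      ∑ ε : ι → Bool, (M + signedSum a ε) ^ r :=
  calc 2 ^ Fintype.card ι * ((1 + θ / 2) ^ r * (1 - 4 * (∑ i, a i ^ 2) / θ ^ 2))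
      = ∑ ε : ι → Bool, (1 + θ / 2) ^ r * (1 - 4 * signedSum a ε ^ 2 / θ ^ 2) := by
        simp only [← mul_sum, sum_sub_distrib, ← sum_div, sum_signedSum_sq, sum_const, card_univ,
          Fintype.card_fun, Fintype.card_bool, nsmul_eq_mul]
        push_cast
        ring
    _ ≤ ∑ ε : ι → Bool, (M + signedSum a ε) ^ r :=
        sum_le_sum fun ε _ => rpow_mul_one_sub_le_rpow_add hr hθ hM (hF ε)

end Signs

section Weights

variable {ι : Type*} [Fintype ι]

theorem card_filter_lt_mul_le_sum_mul_sq {α u : ι → ℝ} {a t : ℝ} (ha : 0 ≤ a) (ht : 0 ≤ t)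
    (hα : ∀ i, a ≤ α i) : (#{i | t < u i} : ℝ) * (a * t ^ 2) ≤ ∑ i, α i * u i ^ 2 :=
  calc (#{i | t < u i} : ℝ) * (a * t ^ 2) = ∑ i ∈ {i | t < u i}, a * t ^ 2 := by
        rw [sum_const, nsmul_eq_mul]
    _ ≤ ∑ i ∈ {i | t < u i}, α i * u i ^ 2 := sum_le_sum fun i hi =>
        mul_le_mul (hα i) (pow_le_pow_left₀ ht (mem_filter.1 hi).2.le 2) (sq_nonneg t)
          (ha.trans (hα i))
    _ ≤ ∑ i, α i * u i ^ 2 := sum_le_sum_of_subset_of_nonneg (subset_univ _) fun i _ _ =>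
        mul_nonneg (ha.trans (hα i)) (sq_nonneg _)

theorem one_add_le_sum_mul_evenPart {p : ℝ} (hp : 2 ≤ p) {α u : ι → ℝ}
    (hα : ∀ i, 1 / (2 * Fintype.card ι) ≤ α i) (hsum : ∑ i, α i = 1)
    (hu : ∀ i, u i ∈ Set.Icc (0 : ℝ) 1)
    (hcard : (Fintype.card ι : ℝ) / 2 < #{i | 1 / 2 < u i}) :
    1 + (p - 2) / 64 ≤ ∑ i, α i * evenPart p (u i) := by
  have hn : (0 : ℝ) < Fintype.card ι := by
    have : (#{i | 1 / 2 < u i} : ℝ) ≤ Fintype.card ι := by exact_mod_cast card_filter_le _ _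
    linarith
  have hα₀ : ∀ i, 0 ≤ α i := fun i => le_trans (by positivity) (hα i)
  have hsq : 1 / 16 ≤ ∑ i, α i * u i ^ 2 := by
    have := card_filter_lt_mul_le_sum_mul_sq (u := u) (by positivity)
      (by norm_num : (0 : ℝ) ≤ 1 / 2) hα
    have h16 : (Fintype.card ι : ℝ) / 2 * (1 / (2 * Fintype.card ι) * (1 / 2) ^ 2) = 1 / 16 := by
      field_simp; norm_num
    nlinarith
  calc 1 + (p - 2) / 64 ≤ ∑ i, α i + (p - 2) / 4 * ∑ i, α i * u i ^ 2 := by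
        rw [hsum]; nlinarith
    _ = ∑ i, α i * (1 + (p - 2) * u i ^ 2 / 4) := by
        rw [mul_sum, ← sum_add_distrib]; exact sum_congr rfl fun i _ => by ring
    _ ≤ ∑ i, α i * evenPart p (u i) := sum_le_sum fun i _ =>
        mul_le_mul_of_nonneg_left (one_add_mul_sq_le_evenPart hp (hu i).1 (hu i).2) (hα₀ i)

theorem mul_le_of_le_mul_rpow_neg {α u C q : ℝ} (hα₀ : 0 < α) (hα₁ : α ≤ 1) (hC : 0 ≤ C)
    (hq : q ≤ 1) (hu : u ≤ C * α ^ (-q)) : α * u ≤ C :=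
  calc α * u ≤ α * (C * α ^ (-q)) := mul_le_mul_of_nonneg_left hu hα₀.le
    _ = C * α ^ (1 - q) := by rw [sub_eq_add_neg, rpow_add hα₀, rpow_one]; ring
    _ ≤ C := mul_le_of_le_one_right hC (rpow_le_one hα₀.le hα₁ (by linarith))

theorem sum_sq_mul_oddPart_le {p C : ℝ} (hp : 2 ≤ p) (hC : 0 ≤ C) {α u : ι → ℝ}
    (hα : ∀ i, 0 < α i) (hsum : ∑ i, α i = 1) (hu : ∀ i, u i ∈ Set.Icc (0 : ℝ) 1)
    (hub : ∀ i, u i ≤ C * α i ^ (-(1 / p))) :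
    ∑ i, (α i * oddPart p (u i)) ^ 2 ≤ (2 ^ p - 1 + p) ^ 2 * C := by
  set K := 2 ^ p - 1 + p
  have hterm : ∀ i, (α i * oddPart p (u i)) ^ 2 ≤ K ^ 2 * C * α i := by
    intro i
    obtain ⟨hu₀, hu₁⟩ := hu i
    have hα₁ : α i ≤ 1 := hsum ▸ single_le_sum (fun j _ => (hα j).le) (mem_univ i)
    have hαu : α i * u i ≤ C :=
      mul_le_of_le_mul_rpow_neg (hα i) hα₁ hC (by rw [div_le_one (by linarith)]; linarith) (hub i)
    have hodd : 0 ≤ α i * oddPart p (u i) :=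
      mul_nonneg (hα i).le (oddPart_nonneg (by linarith) hu₀ hu₁)
    have hodd' : α i * oddPart p (u i) ≤ K * (α i * u i) := by
      rw [mul_left_comm]; exact mul_le_mul_of_nonneg_left (oddPart_le hp hu₀ hu₁) (hα i).le
    calc (α i * oddPart p (u i)) ^ 2 ≤ (K * (α i * u i)) ^ 2 := pow_le_pow_left₀ hodd hodd' 2
      _ = K ^ 2 * ((α i * u i) * (α i * u i)) := by ring
      _ ≤ K ^ 2 * (C * α i) := by
          refine mul_le_mul_of_nonneg_left ?_ (sq_nonneg K)
          exact mul_le_mul_of_nonneg_right hαu (mul_nonneg (hα i).le hu₀) |>.trans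
            (mul_le_mul_of_nonneg_left (mul_le_of_le_one_right (hα i).le hu₁) hC)
      _ = K ^ 2 * C * α i := by ring
  calc ∑ i, (α i * oddPart p (u i)) ^ 2 ≤ ∑ i, K ^ 2 * C * α i := sum_le_sum fun i _ => hterm i
    _ = K ^ 2 * C := by rw [← mul_sum, hsum, mul_one]

theorem sum_mul_evenPart_add_signedSum [DecidableEq ι] (p : ℝ) (α u : ι → ℝ) (ε : ι → Bool) :
    ∑ i, α i * evenPart p (u i) + signedSum (fun i => α i * oddPart p (u i)) ε =
      ∑ i, α i * (1 + boolSign (ε i) * u i) ^ p / (1 + u i ^ p) := by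
  rw [signedSum, ← sum_add_distrib]
  refine sum_congr rfl fun i _ => ?_
  rw [mul_div_assoc, ← evenPart_add_boolSign_mul_oddPart]
  ring

theorem sum_mul_evenPart_add_signedSum_nonneg [DecidableEq ι] {p : ℝ} {α u : ι → ℝ}
    (hα : ∀ i, 0 ≤ α i) (hu : ∀ i, u i ∈ Set.Icc (0 : ℝ) 1) (ε : ι → Bool) :
    0 ≤ ∑ i, α i * evenPart p (u i) + signedSum (fun i => α i * oddPart p (u i)) ε := by
  rw [sum_mul_evenPart_add_signedSum]
  refine sum_nonneg fun i _ => ?_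
  rw [mul_div_assoc, ← evenPart_add_boolSign_mul_oddPart]
  exact mul_nonneg (hα i) (evenPart_add_boolSign_mul_oddPart_nonneg (hu i).1 (hu i).2 _)

end Weights

theorem phi_eq_two_rpow_neg_mul_sum (p : ℝ) {n : ℕ} (α u : Fin n → ℝ) :
    phi p α u = 2 ^ (-(n : ℝ)) * ∑ ε : Fin n → Bool,
      (∑ i, α i * evenPart p (u i) + signedSum (fun i => α i * oddPart p (u i)) ε) ^ (1 / p) := by
  simp only [sum_mul_evenPart_add_signedSum]
  rfl

theorem eventually_one_lt_mul_one_sub_mul_rpow_neg {L q : ℝ} (hL : 1 < L) (hq : 0 < q) (B : ℝ) :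
    ∀ᶠ n : ℕ in atTop, 1 < L * (1 - B * (n : ℝ) ^ (-q)) := by
  have h : Tendsto (fun n : ℕ => L * (1 - B * (n : ℝ) ^ (-q))) atTop (𝓝 (L * (1 - B * 0))) :=
    (((tendsto_rpow_neg_atTop hq).comp tendsto_natCast_atTop_atTop).const_mul B
      |>.const_sub 1).const_mul L
  exact h.eventually_const_lt (by simpa using hL)

theorem stmt_7 (p : ℝ) (hp : 2 < p) :
    ∃ n₁ : ℕ, 0 < n₁ ∧ ∀ n : ℕ, n₁ < n → ∀ α u : Fin n → ℝ,
      (∀ i, 1 / (2 * (n : ℝ)) ≤ α i) → (∀ i, α i ≤ ((n : ℝ) + 1) / (2 * n)) →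
      ∑ i, α i = 1 →
      (∀ i, u i ∈ Set.Icc (0 : ℝ) 1) →
      (∀ i, u i ≤ max ((2:ℝ) ^ (1 - 1 / p)) (1 / (2 - (2:ℝ) ^ (1 / p))) *
        (n : ℝ) ^ (-(1 / p)) * (α i) ^ (-(1 / p))) →
      (n : ℝ) / 2 < (Finset.univ.filter fun i => 1 / 2 < u i).card →
      1 < phi p α u := by
  set c := max ((2:ℝ) ^ (1 - 1 / p)) (1 / (2 - (2:ℝ) ^ (1 / p)))
  set θ := (p - 2) / 64
  set K := 2 ^ p - 1 + p
  have hc : 0 < c := (rpow_pos_of_pos two_pos _).trans_le (le_max_left _ _)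
  have hθ : 0 < θ := div_pos (sub_pos.2 hp) (by norm_num)
  have hr : 0 < 1 / p := by positivity
  have hL : 1 < (1 + θ / 2) ^ (1 / p) := one_lt_rpow (by linarith) hr
  obtain ⟨N, hN⟩ := eventually_atTop.1
    (eventually_one_lt_mul_one_sub_mul_rpow_neg hL hr (4 * (K ^ 2 * c) / θ ^ 2))
  refine ⟨N + 1, N.succ_pos, fun n hn α u hα _ hsum hu hub hcard => ?_⟩
  have hn₀ : (0 : ℝ) < n := by exact_mod_cast (show 0 < n by omega)
  have hα₀ : ∀ i, 0 < α i := fun i => lt_of_lt_of_le (by positivity) (hα i)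
  have hM := one_add_le_sum_mul_evenPart hp.le (by simpa using hα) hsum hu (by simpa using hcard)
  have hV := sum_sq_mul_oddPart_le (C := c * (n : ℝ) ^ (-(1 / p))) hp.le (by positivity) hα₀
    hsum hu hub
  have hmean := mul_rpow_le_sum_rpow_add_signedSum hr.le hθ hM _
    (sum_mul_evenPart_add_signedSum_nonneg (fun i => (hα₀ i).le) hu)
  rw [Fintype.card_fin] at hmean
  rw [phi_eq_two_rpow_neg_mul_sum, rpow_neg two_pos.le, rpow_natCast, ← div_eq_inv_mul,
    lt_div_iff₀ (by positivity), one_mul]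
  refine (lt_mul_right (by positivity) (hN n (by omega))).trans_le (le_trans ?_ hmean)
  gcongr
  rw [div_mul_eq_mul_div, mul_assoc, mul_assoc]
  gcongr
end

section
/- Let p > 2 be a real number. There exists a positive integer n₂ such that for all n > n₂ the following holds: for all real numbers α_1,…,α_n with 1/(2n) ≤ α_i ≤ (n+1)/(2n) for all i and ∑_{i=1}^n α_i = 1, and all u_1,…,u_n ∈ [0,1] with u_i ≤ c₁·n^{−1/p}·α_i^{−1/p} for all i, if the number of indices i with u_i > 1/2 is at most n/2, then for every index j with 0 < u_j < 1, the one-variable function t ↦ φ(u_1,…,u_{j−1}, t, u_{j+1},…,u_n) has strictly positive derivative at t = u_j. -/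
open Real Finset

private lemma chord {θ t : ℝ} (hθ0 : 0 < θ) (hθ1 : θ < 1) (ht0 : 0 ≤ t) (ht1 : t ≤ 1) :
    1 + ((2:ℝ) ^ θ - 1) * t ≤ (1 + t) ^ θ := by
  have hc := (Real.strictConcaveOn_rpow hθ0 hθ1).concaveOn
  have h := hc.2 (Set.mem_Ici.2 (by norm_num : (0:ℝ) ≤ 1))
    (Set.mem_Ici.2 (by norm_num : (0:ℝ) ≤ 2)) (by linarith : (0:ℝ) ≤ 1 - t) ht0 (by ring)
  simp only [smul_eq_mul] at h
  have h1 : (1 - t) * 1 + t * 2 = 1 + t := by ring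
  rw [h1] at h
  calc 1 + ((2:ℝ) ^ θ - 1) * t = (1-t) * (1:ℝ)^θ + t * (2:ℝ)^θ := by
        rw [Real.one_rpow]; ring
    _ ≤ (1+t)^θ := h

set_option maxHeartbeats 2000000 in
lemma core (p : ℝ) (hp : 2 < p) (t A a : ℝ) (ht0 : 0 < t) (ht1 : t < 1)
    (hA : (2:ℝ) ^ (-(p+4)) ≤ A) (ha0 : 0 < a) (ha1 : a ≤ 1)
    (hsm : (2:ℝ)^(p+2) * (a * t ^ (p-2)) <
      (2:ℝ) ^ (-(p+4)) * ((2:ℝ) ^ (min (p-2) 2⁻¹) - 1)) :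
    (1-t)^(p-1) * (1+t^(p-1)) * (A + a*((1-t)^p/(1+t^p))) ^ (1/p-1)
      < (1+t)^(p-1) * (1-t^(p-1)) * (A + a*((1+t)^p/(1+t^p))) ^ (1/p-1) := by
  have hp0 : (0:ℝ) < p := by linarith
  have hp1 : (1:ℝ) ≤ p - 1 := by linarith
  have hs0 : 0 < t ^ (p-1) := Real.rpow_pos_of_pos ht0 _
  have hs1 : t ^ (p-1) < 1 := Real.rpow_lt_one ht0.le ht1 (by linarith)
  have hst : t ^ (p-1) ≤ t := by
    calc t ^ (p-1) ≤ t ^ (1:ℝ) := Real.rpow_le_rpow_of_exponent_ge ht0 ht1.le (by linarith)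
    _ = t := Real.rpow_one t
  set s := t ^ (p-1) with hs_def
  have h1pt : (0:ℝ) < 1 + t := by linarith
  have h1mt : (0:ℝ) < 1 - t := by linarith
  have hpow_p : 0 < (1+t)^(p-1) := Real.rpow_pos_of_pos h1pt _
  have hpow_m : 0 < (1-t)^(p-1) := Real.rpow_pos_of_pos h1mt _
  set gm := (1-t)^(p-1) * (1+s) with hgm_def
  set gp := (1+t)^(p-1) * (1-s) with hgp_def
  have hgm0 : 0 < gm := mul_pos hpow_m (by linarith)
  have hgp0 : 0 < gp := mul_pos hpow_p (by linarith)
  set x := (1+t)/(1-t) with hx_def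
  have hx0 : 0 < x := div_pos h1pt h1mt
  have hx1 : 1 + t ≤ x := by
    rw [hx_def, le_div_iff₀ h1mt]
    have h := mul_nonneg ht0.le h1pt.le
    linarith [h]
  set w := (1-s)/(1+s) with hw_def
  have hw0 : 0 < w := div_pos (by linarith) (by linarith)
  have hw1 : w ≤ 1 := by
    rw [hw_def, div_le_one (by linarith)]; linarith
  set r := gp / gm with hr_def
  have hr0 : 0 < r := div_pos hgp0 hgm0
  have hr_eq : r = x ^ (p-1) * w := by
    rw [hr_def, hgp_def, hgm_def, hx_def, hw_def, Real.div_rpow h1pt.le h1mt.le]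
    rw [div_mul_div_comm]
  have hwx : x⁻¹ ≤ w := by
    rw [hx_def, hw_def, inv_div, div_le_div_iff₀ h1pt (by linarith)]
    have h := mul_le_mul_of_nonneg_left hst (le_of_lt ht0)
    linarith [hst]
  have hxp2 : x ^ (p-2) ≤ r := by
    have hxe : x ^ (p-2) = x ^ (p-1) * x⁻¹ := by
      rw [← Real.rpow_neg_one x, ← Real.rpow_add hx0]; ring_nf
    rw [hxe, hr_eq]
    exact mul_le_mul_of_nonneg_left hwx (Real.rpow_nonneg hx0.le _)
  set θ := min (p-2) 2⁻¹ with hθ_def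
  have hθ0 : 0 < θ := lt_min (by linarith) (by norm_num)
  have hθ1 : θ < 1 := lt_of_le_of_lt (min_le_right _ _) (by norm_num)
  set κ := (2:ℝ)^θ - 1 with hκ_def
  have hκ0 : 0 < κ := by
    have : (1:ℝ) < (2:ℝ)^θ :=
      (Real.one_lt_rpow_iff_of_pos (by norm_num)).2 (Or.inl ⟨by norm_num, hθ0⟩)
    linarith
  have hr1 : 1 + κ * t ≤ r := by
    have h1 : 1 + κ * t ≤ (1+t)^θ := chord hθ0 hθ1 ht0.le ht1.le
    have h2 : (1+t)^θ ≤ (1+t)^(p-2) :=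
      Real.rpow_le_rpow_of_exponent_le (by linarith) (min_le_left _ _)
    have h3 : (1+t)^(p-2) ≤ x^(p-2) := Real.rpow_le_rpow (by linarith) hx1 (by linarith)
    linarith
  have hr_ge1 : 1 ≤ r := by
    have : 0 < κ * t := mul_pos hκ0 ht0
    linarith
  set m := p / (p-1) with hm_def
  have hm1 : 1 ≤ m := by rw [hm_def, le_div_iff₀ (by linarith)]; linarith
  have hm2 : m ≤ 2 := by rw [hm_def, div_le_iff₀ (by linarith)]; linarith
  set R := r ^ m with hR_def
  have hRr : r ≤ R := by
    calc r = r ^ (1:ℝ) := (Real.rpow_one r).symm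
    _ ≤ r ^ m := Real.rpow_le_rpow_of_exponent_le hr_ge1 hm1
  have hR1 : 1 + κ * t ≤ R := le_trans hr1 hRr
  have htp0 : 0 < t ^ p := Real.rpow_pos_of_pos ht0 p
  have hd0 : (0:ℝ) < 1 + t^p := by linarith
  set vp := (1+t)^p/(1+t^p) with hvp_def
  set vm := (1-t)^p/(1+t^p) with hvm_def
  have hvp0 : 0 < vp := div_pos (Real.rpow_pos_of_pos h1pt p) hd0
  have hvm0 : 0 < vm := div_pos (Real.rpow_pos_of_pos h1mt p) hd0
  have hx_p : (1-t)^p * x^p = (1+t)^p := by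
    rw [← Real.mul_rpow h1mt.le hx0.le]
    congr 1
    rw [hx_def]
    field_simp
  have hpm : (p-1) * m = p := by
    rw [hm_def]
    field_simp
  have hvR : vm * R = vp * w ^ m := by
    rw [hR_def, hr_eq, Real.mul_rpow (Real.rpow_nonneg hx0.le _) hw0.le,
      ← Real.rpow_mul hx0.le, hpm, hvm_def, hvp_def]
    rw [div_mul_eq_mul_div, div_mul_eq_mul_div, ← mul_assoc, hx_p]
  have hw_bern : 1 + m * (w - 1) ≤ w ^ m := by
    have h := one_add_mul_self_le_rpow_one_add (s := w - 1) (by linarith) hm1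
    have h2 : (1:ℝ) + (w - 1) = w := by ring
    rw [h2] at h
    exact h
  have hv_ub : vp ≤ (2:ℝ)^p := by
    calc vp ≤ (1+t)^p := div_le_self (Real.rpow_nonneg h1pt.le _) (by linarith)
    _ ≤ (2:ℝ)^p := Real.rpow_le_rpow h1pt.le (by linarith) hp0.le
  have h2p2 : (2:ℝ)^(p+2) = (2:ℝ)^p * 4 := by
    have h4 : (2:ℝ)^(2:ℝ) = 4 := by
      have := Real.rpow_natCast (2:ℝ) 2
      norm_num at this
      linarith [this]
    rw [Real.rpow_add (by norm_num : (0:ℝ) < 2), h4]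
  have hkey : vp - vm * R ≤ (2:ℝ)^(p+2) * s := by
    have h1mw : 1 - w ≤ 2 * s := by
      have he : 1 - w = 2*s/(1+s) := by
        rw [hw_def]; field_simp; ring
      rw [he]
      exact div_le_self (by linarith) (by linarith)
    have hwm : 1 - w^m ≤ m * (1 - w) := by linarith [hw_bern]
    have hwm0 : 0 ≤ 1 - w^m := by
      have : w ^ m ≤ 1 := Real.rpow_le_one hw0.le hw1 (by linarith)
      linarith
    calc vp - vm * R = vp * (1 - w^m) := by rw [hvR]; ring
    _ ≤ (2:ℝ)^p * (m * (1-w)) :=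
        mul_le_mul hv_ub hwm hwm0 (Real.rpow_nonneg (by norm_num) _)
    _ ≤ (2:ℝ)^p * (2 * (2*s)) := by
        apply mul_le_mul_of_nonneg_left _ (Real.rpow_nonneg (by norm_num) _)
        have h1w : 0 ≤ 1 - w := by linarith
        calc m * (1-w) ≤ 2 * (1-w) := mul_le_mul_of_nonneg_right hm2 h1w
        _ ≤ 2 * (2*s) := by linarith
    _ = (2:ℝ)^(p+2) * s := by rw [h2p2]; ring
  -- assemble
  have hs_eq : s = t^(p-2) * t := by
    rw [hs_def, show p - 1 = (p-2)+1 by ring, Real.rpow_add ht0, Real.rpow_one]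
  have hc00 : (0:ℝ) < (2:ℝ)^(-(p+4)) := Real.rpow_pos_of_pos (by norm_num) _
  have hA0 : 0 < A := lt_of_lt_of_le hc00 hA
  have hfin : A + a * vp < R * (A + a * vm) := by
    have hAR : (2:ℝ)^(-(p+4)) * (κ * t) ≤ A * (R - 1) := by
      have h1 : κ * t ≤ R - 1 := by linarith
      have h2 : 0 ≤ κ * t := (mul_pos hκ0 ht0).le
      calc (2:ℝ)^(-(p+4)) * (κ * t) ≤ A * (κ * t) := mul_le_mul_of_nonneg_right hA h2
      _ ≤ A * (R - 1) := mul_le_mul_of_nonneg_left h1 hA0.le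
    have hstep : a * (vp - vm * R) < (2:ℝ)^(-(p+4)) * (κ * t) := by
      calc a * (vp - vm*R) ≤ a * ((2:ℝ)^(p+2) * s) :=
            mul_le_mul_of_nonneg_left hkey ha0.le
      _ = ((2:ℝ)^(p+2) * (a * t^(p-2))) * t := by rw [hs_eq]; ring
      _ < ((2:ℝ)^(-(p+4)) * κ) * t := mul_lt_mul_of_pos_right hsm ht0
      _ = (2:ℝ)^(-(p+4)) * (κ * t) := by ring
    have hlt : a * (vp - vm * R) < A * (R - 1) := lt_of_lt_of_le hstep hAR
    linarith [hlt]
  have hSm0 : 0 < A + a * vm := add_pos hA0 (mul_pos ha0 hvm0)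
  have hSp0 : 0 < A + a * vp := add_pos hA0 (mul_pos ha0 hvp0)
  have hq0 : (0:ℝ) < 1 - 1/p := by
    have : 1/p < 1 := by rw [div_lt_one hp0]; linarith
    linarith
  have hp_ne : p ≠ 0 := ne_of_gt hp0
  have hp1_ne : p - 1 ≠ 0 := by intro h; linarith
  have hmq : m * (1 - 1/p) = 1 := by
    rw [hm_def]
    field_simp
  have hRq : R ^ (1-1/p) = r := by
    rw [hR_def, ← Real.rpow_mul hr0.le, hmq, Real.rpow_one]
  have hR0 : 0 < R := Real.rpow_pos_of_pos hr0 m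
  have hfin2 : (A + a*vp)^(1-(1:ℝ)/p) < r * (A + a*vm)^(1-(1:ℝ)/p) := by
    calc (A+a*vp)^(1-(1:ℝ)/p) < (R*(A+a*vm))^(1-(1:ℝ)/p) :=
          Real.rpow_lt_rpow hSp0.le hfin hq0
    _ = R^(1-(1:ℝ)/p) * (A+a*vm)^(1-(1:ℝ)/p) := Real.mul_rpow hR0.le hSm0.le
    _ = r * (A+a*vm)^(1-(1:ℝ)/p) := by rw [hRq]
  rw [show (1/p-1 : ℝ) = -(1-1/p) by ring, Real.rpow_neg hSm0.le, Real.rpow_neg hSp0.le,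
    ← div_eq_mul_inv, ← div_eq_mul_inv,
    div_lt_div_iff₀ (Real.rpow_pos_of_pos hSm0 _) (Real.rpow_pos_of_pos hSp0 _)]
  calc gm * (A + a*vp)^(1-(1:ℝ)/p) < gm * (r * (A + a*vm)^(1-(1:ℝ)/p)) :=
        mul_lt_mul_of_pos_left hfin2 hgm0
  _ = gp * (A + a*vm)^(1-(1:ℝ)/p) := by
        rw [hr_def, ← mul_assoc, mul_div_cancel₀ _ (ne_of_gt hgm0)]

private lemma pair_sum {n : ℕ} (f : (Fin n → Bool) → ℝ) (j : Fin n) :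
    2 * ∑ ε : Fin n → Bool, f ε =
      ∑ ε : Fin n → Bool, (f (Function.update ε j true) + f (Function.update ε j false)) := by
  have hinv : Function.Involutive (fun ε : Fin n → Bool => Function.update ε j (!(ε j))) := by
    intro ε
    funext i
    by_cases h : i = j
    · subst h; simp
    · simp [Function.update_of_ne h]
  have key : ∀ ε : Fin n → Bool,
      f (Function.update ε j true) + f (Function.update ε j false)
        = f ε + f (Function.update ε j (!(ε j))) := by
    intro ε
    cases h : ε j with
    | false =>
        have h1 : Function.update ε j false = ε := by
          rw [← h]; exact Function.update_eq_self j ε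
        rw [h1]
        show f (Function.update ε j true) + f ε = f ε + f (Function.update ε j true)
        ring
    | true =>
        have h1 : Function.update ε j true = ε := by
          rw [← h]; exact Function.update_eq_self j ε
        rw [h1]
        show f ε + f (Function.update ε j false) = f ε + f (Function.update ε j false)
        ring
  have h2 : ∑ ε : Fin n → Bool, (f (Function.update ε j true) + f (Function.update ε j false))
      = ∑ ε : Fin n → Bool, (f ε + f (Function.update ε j (!(ε j)))) :=
    Finset.sum_congr rfl (fun ε _ => key ε)
  have h3 : ∑ ε : Fin n → Bool, f ((hinv.toPerm _) ε) = ∑ ε : Fin n → Bool, f ε :=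
    Equiv.sum_comp _ f
  have h4 : ∑ ε : Fin n → Bool, f (Function.update ε j (!(ε j))) = ∑ ε : Fin n → Bool, f ε := h3
  rw [h2, Finset.sum_add_distrib, h4]
  ring

set_option maxHeartbeats 1000000 in
theorem stmt_8 (p : ℝ) (hp : 2 < p) :
    ∃ n₂ : ℕ, 0 < n₂ ∧ ∀ n : ℕ, n₂ < n → ∀ α u : Fin n → ℝ,
      (∀ i, 1 / (2 * (n : ℝ)) ≤ α i) → (∀ i, α i ≤ ((n : ℝ) + 1) / (2 * n)) →
      ∑ i, α i = 1 →
      (∀ i, u i ∈ Set.Icc (0 : ℝ) 1) →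
      (∀ i, u i ≤ max ((2:ℝ) ^ (1 - 1 / p)) (1 / (2 - (2:ℝ) ^ (1 / p))) *
        (n : ℝ) ^ (-(1 / p)) * (α i) ^ (-(1 / p))) →
      ((Finset.univ.filter fun i => 1 / 2 < u i).card : ℝ) ≤ (n : ℝ) / 2 →
      ∀ j : Fin n, 0 < u j → u j < 1 →
        0 < deriv (fun t : ℝ => phi p α (Function.update u j t)) (u j) := by
  have hp0 : (0:ℝ) < p := by linarith
  have hp1 : (1:ℝ) ≤ p := by linarith
  have hpne : p ≠ 0 := ne_of_gt hp0
  have hp2ne : p - 2 ≠ 0 := by intro h; linarith [sub_eq_zero.1 h]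
  set c₁ := max ((2:ℝ) ^ (1 - 1 / p)) (1 / (2 - (2:ℝ) ^ (1 / p))) with hc₁_def
  have hc₁0 : 0 < c₁ := lt_of_lt_of_le (Real.rpow_pos_of_pos two_pos _) (le_max_left _ _)
  set κ := (2:ℝ) ^ (min (p-2) 2⁻¹) - 1 with hκ_def
  have hκ0 : 0 < κ := by
    have h : (1:ℝ) < (2:ℝ) ^ (min (p-2) 2⁻¹) :=
      (Real.one_lt_rpow_iff_of_pos (by norm_num)).2
        (Or.inl ⟨by norm_num, lt_min (by linarith) (by norm_num)⟩)
    rw [hκ_def]; linarith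
  set c₀ := (2:ℝ) ^ (-(p+4)) with hc₀_def
  have hc₀0 : 0 < c₀ := Real.rpow_pos_of_pos two_pos _
  set B := (2:ℝ)^(p+2) * c₁^(p-2) / (c₀ * κ) with hB_def
  have hB0 : 0 < B := div_pos
    (mul_pos (Real.rpow_pos_of_pos two_pos _) (Real.rpow_pos_of_pos hc₁0 _))
    (mul_pos hc₀0 hκ0)
  refine ⟨max 4 ⌈B ^ (p/(p-2))⌉₊, lt_of_lt_of_le (by norm_num) (le_max_left _ _), ?_⟩
  intro n hn α u hα1 hα2 hsum hicc hub hcard j hj0 hj1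
  have hn4 : (4:ℕ) < n := lt_of_le_of_lt (le_max_left _ _) hn
  have hn0 : (0:ℝ) < n := by have : 0 < n := by omega
                             exact_mod_cast this
  have hn4' : (4:ℝ) < n := by exact_mod_cast hn4
  have hnB : B ^ (p/(p-2)) < (n:ℝ) := by
    have h1 : (⌈B ^ (p/(p-2))⌉₊ : ℝ) < n := by
      exact_mod_cast lt_of_le_of_lt (le_max_right 4 _) hn
    linarith [Nat.le_ceil (B ^ (p/(p-2)))]
  have ht0 : 0 < u j := hj0
  have ht1 : u j < 1 := hj1
  have hαpos : ∀ i, 0 < α i :=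
    fun i => lt_of_lt_of_le (div_pos one_pos (by linarith)) (hα1 i)
  have hαj0 : 0 < α j := hαpos j
  have hαj1 : α j ≤ 1 := le_trans (hα2 j) (by rw [div_le_one (by linarith)]; linarith)
  -- the smallness hypothesis for core
  have hsm : (2:ℝ)^(p+2) * (α j * (u j)^(p-2)) < c₀ * κ := by
    have hNpos : (0:ℝ) < (n:ℝ)^((p-2)/p) := Real.rpow_pos_of_pos hn0 _
    have hup : (u j) ^ p ≤ c₁^p * ((n:ℝ)⁻¹ * (α j)⁻¹) := by
      have h1 : (u j)^p ≤ (c₁ * (n:ℝ)^(-(1/p)) * (α j)^(-(1/p)))^p :=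
        Real.rpow_le_rpow ht0.le (hub j) hp0.le
      have h2 : (c₁ * (n:ℝ)^(-(1/p)) * (α j)^(-(1/p)))^p
          = c₁^p * ((n:ℝ)^(-(1/p)))^p * ((α j)^(-(1/p)))^p := by
        rw [Real.mul_rpow (mul_nonneg hc₁0.le (Real.rpow_nonneg hn0.le _))
            (Real.rpow_nonneg hαj0.le _),
          Real.mul_rpow hc₁0.le (Real.rpow_nonneg hn0.le _)]
      have h3 : ((n:ℝ)^(-(1/p)))^p = (n:ℝ)⁻¹ := by
        rw [← Real.rpow_mul hn0.le, show (-(1/p))*p = -1 by field_simp, Real.rpow_neg_one]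
      have h4 : ((α j)^(-(1/p)))^p = (α j)⁻¹ := by
        rw [← Real.rpow_mul hαj0.le, show (-(1/p))*p = -1 by field_simp, Real.rpow_neg_one]
      rw [h2, h3, h4, mul_assoc] at h1
      exact h1
    have hatp : α j * (u j)^p ≤ c₁^p / n := by
      have h5 := mul_le_mul_of_nonneg_left hup hαj0.le
      have h6 : α j * (c₁^p * ((n:ℝ)⁻¹ * (α j)⁻¹)) = c₁^p / n := by
        field_simp
      linarith [h5]
    have hat2 : α j * (u j)^(p-2) ≤ c₁^(p-2) / (n:ℝ)^((p-2)/p) := by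
      have hid : (α j)^(2/p) * (α j * (u j)^p)^((p-2)/p) = α j * (u j)^(p-2) := by
        rw [Real.mul_rpow hαj0.le (Real.rpow_nonneg ht0.le _), ← Real.rpow_mul ht0.le,
          show p * ((p-2)/p) = p - 2 by rw [mul_comm, div_mul_cancel₀ _ hpne],
          ← mul_assoc, ← Real.rpow_add hαj0,
          show 2/p + (p-2)/p = 1 by rw [← add_div, show 2 + (p-2) = p by ring, div_self hpne],
          Real.rpow_one]
      calc α j * (u j)^(p-2) = (α j)^(2/p) * (α j * (u j)^p)^((p-2)/p) := hid.symm
      _ ≤ 1 * (c₁^p / (n:ℝ))^((p-2)/p) :=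
          mul_le_mul (Real.rpow_le_one hαj0.le hαj1 (by positivity))
            (Real.rpow_le_rpow (mul_nonneg hαj0.le (Real.rpow_nonneg ht0.le _)) hatp
              (div_nonneg (by linarith) hp0.le))
            (Real.rpow_nonneg (mul_nonneg hαj0.le (Real.rpow_nonneg ht0.le _)) _) zero_le_one
      _ = c₁^(p-2) / (n:ℝ)^((p-2)/p) := by
          rw [one_mul, Real.div_rpow (Real.rpow_nonneg hc₁0.le _) hn0.le,
            ← Real.rpow_mul hc₁0.le,
            show p * ((p-2)/p) = p - 2 by rw [mul_comm, div_mul_cancel₀ _ hpne]]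
    have hnp : B < (n:ℝ)^((p-2)/p) := by
      have h0 : (0:ℝ) < (p-2)/p := div_pos (by linarith) hp0
      have h1 : (B^(p/(p-2)))^((p-2)/p) < (n:ℝ)^((p-2)/p) :=
        Real.rpow_lt_rpow (Real.rpow_nonneg hB0.le _) hnB h0
      rwa [← Real.rpow_mul hB0.le,
        show (p/(p-2)) * ((p-2)/p) = 1 by field_simp, Real.rpow_one] at h1
    have h2' : (2:ℝ)^(p+2) * c₁^(p-2) < (n:ℝ)^((p-2)/p) * (c₀ * κ) := by
      rw [hB_def] at hnp
      exact (div_lt_iff₀ (mul_pos hc₀0 hκ0)).1 hnp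
    calc (2:ℝ)^(p+2) * (α j * (u j)^(p-2))
        ≤ (2:ℝ)^(p+2) * (c₁^(p-2) / (n:ℝ)^((p-2)/p)) :=
        mul_le_mul_of_nonneg_left hat2 (Real.rpow_nonneg (by norm_num) _)
    _ < c₀ * κ := by
        rw [← mul_div_assoc]
        exact (div_lt_iff₀ hNpos).2 (by linarith [h2'])
  have htermnn : ∀ (i : Fin n) (b : Bool),
      0 ≤ α i * (1 + (if b then (1:ℝ) else -1) * u i) ^ p / (1 + u i ^ p) := by
    intro i b
    have h1 : 0 ≤ u i := (hicc i).1
    have h2 : u i ≤ 1 := (hicc i).2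
    have hbase : 0 ≤ 1 + (if b then (1:ℝ) else -1) * u i := by
      cases b <;> simp <;> linarith
    have hd : 0 < 1 + u i ^ p := by
      have := Real.rpow_nonneg h1 p; linarith
    exact div_nonneg (mul_nonneg (hαpos i).le (Real.rpow_nonneg hbase p)) hd.le
  -- lower bound on the off-j sum, for every sign pattern
  have hc₀A : ∀ ε : Fin n → Bool, c₀ ≤
      ∑ i ∈ univ.erase j, α i * (1 + (if ε i then (1:ℝ) else -1) * u i) ^ p / (1 + u i ^ p) := by
    intro ε
    set L := (univ.filter (fun i : Fin n => ¬ (1/2 < u i))).erase j with hL_def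
    have hLsub : L ⊆ univ.erase j := Finset.erase_subset_erase j (Finset.filter_subset _ _)
    have hstep1 : ∑ i ∈ L, α i * (1 + (if ε i then (1:ℝ) else -1) * u i)^p/(1+u i^p)
        ≤ ∑ i ∈ univ.erase j, α i * (1 + (if ε i then (1:ℝ) else -1) * u i)^p/(1+u i^p) :=
      Finset.sum_le_sum_of_subset_of_nonneg hLsub (fun i _ _ => htermnn i (ε i))
    have hstep2 : ∀ i ∈ L, (2:ℝ)^(-(p+1)) * α i
        ≤ α i * (1 + (if ε i then (1:ℝ) else -1) * u i)^p/(1+u i^p) := by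
      intro i hi
      have hui : u i ≤ 1/2 := by
        have h1 := Finset.mem_of_mem_erase hi
        have h2 := (Finset.mem_filter.1 h1).2
        linarith [not_lt.1 h2]
      have h0i : 0 ≤ u i := (hicc i).1
      have hbase : (1/2:ℝ) ≤ 1 + (if ε i then (1:ℝ) else -1) * u i := by
        cases (ε i) <;> simp <;> linarith
      have hnum : (2:ℝ)^(-p) ≤ (1 + (if ε i then (1:ℝ) else -1) * u i)^p := by
        have h := Real.rpow_le_rpow (by norm_num : (0:ℝ) ≤ 1/2) hbase hp0.le
        have he : ((1/2:ℝ))^p = (2:ℝ)^(-p) := by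
          rw [Real.rpow_neg (by norm_num : (0:ℝ) ≤ 2), ← Real.inv_rpow (by norm_num : (0:ℝ) ≤ 2)]
          norm_num
        rw [← he]
        exact h
      have hdenle : 1 + u i ^ p ≤ 2 := by
        have := Real.rpow_le_one h0i (le_trans hui (by norm_num)) hp0.le
        linarith
      have hdpos : 0 < 1 + u i ^ p := by
        have := Real.rpow_nonneg h0i p
        linarith
      have hdiv : (2:ℝ)^(-p)/2 ≤ (1 + (if ε i then (1:ℝ) else -1) * u i)^p / (1 + u i^p) :=
        div_le_div₀ (Real.rpow_nonneg (by linarith : (0:ℝ) ≤ 1 + (if ε i then (1:ℝ) else -1) * u i) p)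
          hnum hdpos hdenle
      have hh : (2:ℝ)^(-(p+1)) = (2:ℝ)^(-p)/2 := by
        rw [show -(p+1) = -p + (-1) by ring, Real.rpow_add (by norm_num : (0:ℝ) < 2),
          Real.rpow_neg_one]
        ring
      calc (2:ℝ)^(-(p+1)) * α i = α i * ((2:ℝ)^(-p)/2) := by rw [hh]; ring
      _ ≤ α i * ((1 + (if ε i then (1:ℝ) else -1) * u i)^p / (1 + u i^p)) :=
          mul_le_mul_of_nonneg_left hdiv (hαpos i).le
      _ = α i * (1 + (if ε i then (1:ℝ) else -1) * u i)^p / (1 + u i^p) :=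
          (mul_div_assoc _ _ _).symm
    have hstep2' : ∑ i ∈ L, (2:ℝ)^(-(p+1)) * α i
        ≤ ∑ i ∈ L, α i * (1 + (if ε i then (1:ℝ) else -1) * u i)^p/(1+u i^p) :=
      Finset.sum_le_sum hstep2
    have hcardL : (n:ℝ)/2 - 1 ≤ (L.card : ℝ) := by
      have hfil : (univ.filter (fun i : Fin n => 1/2 < u i)).card
          + (univ.filter (fun i : Fin n => ¬ (1/2 < u i))).card = n := by
        rw [Finset.card_filter_add_card_filter_not]
        simp
      have h1 : (n:ℝ)/2 ≤ ((univ.filter (fun i : Fin n => ¬ (1/2 < u i))).card : ℝ) := by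
        have := congrArg (Nat.cast : ℕ → ℝ) hfil
        push_cast at this
        linarith [hcard]
      have h2 : (univ.filter (fun i : Fin n => ¬ (1/2 < u i))).card ≤ L.card + 1 := by
        have h3 := Finset.pred_card_le_card_erase
          (s := univ.filter (fun i : Fin n => ¬ (1/2 < u i))) (a := j)
        rw [hL_def]
        omega
      have h2' : ((univ.filter (fun i : Fin n => ¬ (1/2 < u i))).card : ℝ) ≤ (L.card : ℝ) + 1 := by
        exact_mod_cast h2
      linarith
    have hsumα : (L.card : ℝ) * (1/(2*(n:ℝ))) ≤ ∑ i ∈ L, α i := by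
      have := Finset.card_nsmul_le_sum L α (1/(2*(n:ℝ))) (fun i _ => hα1 i)
      simpa [nsmul_eq_mul] using this
    have hc2 : (0:ℝ) < (2:ℝ)^(-(p+1)) := Real.rpow_pos_of_pos two_pos _
    have h8 : (1:ℝ)/8 ≤ ((n:ℝ)/2 - 1) * (1/(2*(n:ℝ))) := by
      have hd : ((n:ℝ)/2 - 1) * (1/(2*(n:ℝ))) - 1/8 = ((n:ℝ) - 4)/(8*(n:ℝ)) := by
        field_simp
        ring
      have : (0:ℝ) ≤ ((n:ℝ) - 4)/(8*(n:ℝ)) := div_nonneg (by linarith) (by linarith)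
      linarith
    have hc₀8 : c₀ = (2:ℝ)^(-(p+1)) * (1/8) := by
      rw [hc₀_def, show -(p+4) = -(p+1) + (-3:ℝ) by ring,
        Real.rpow_add (by norm_num : (0:ℝ) < 2)]
      congr 1
      rw [Real.rpow_neg (by norm_num : (0:ℝ) ≤ 2), show (3:ℝ) = ((3:ℕ):ℝ) by norm_num,
        Real.rpow_natCast]
      norm_num
    calc c₀ = (2:ℝ)^(-(p+1)) * (1/8) := hc₀8
    _ ≤ (2:ℝ)^(-(p+1)) * (((n:ℝ)/2 - 1) * (1/(2*(n:ℝ)))) :=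
        mul_le_mul_of_nonneg_left h8 hc2.le
    _ ≤ (2:ℝ)^(-(p+1)) * ((L.card : ℝ) * (1/(2*(n:ℝ)))) := by
        apply mul_le_mul_of_nonneg_left _ hc2.le
        apply mul_le_mul_of_nonneg_right hcardL
        positivity
    _ ≤ (2:ℝ)^(-(p+1)) * ∑ i ∈ L, α i := mul_le_mul_of_nonneg_left hsumα hc2.le
    _ = ∑ i ∈ L, (2:ℝ)^(-(p+1)) * α i := Finset.mul_sum _ _ _
    _ ≤ ∑ i ∈ L, α i * (1 + (if ε i then (1:ℝ) else -1) * u i)^p/(1+u i^p) := hstep2'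
    _ ≤ ∑ i ∈ univ.erase j, α i * (1 + (if ε i then (1:ℝ) else -1) * u i)^p/(1+u i^p) := hstep1
  -- derivative machinery
  have hupd : Function.update u j (u j) = u := Function.update_eq_self j u
  have hujp0 : (0:ℝ) ≤ (u j)^p := Real.rpow_nonneg ht0.le p
  have hden0 : (0:ℝ) < 1 + (u j)^p := by linarith
  set C : Bool → ℝ := fun b => if b then (1 + u j)^(p-1) * (1 - (u j)^(p-1))
      else -((1 - u j)^(p-1) * (1 + (u j)^(p-1))) with hC_def
  have hkeyx : ∀ x : ℝ, 0 < x → x^(p-1) * x = x^p := by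
    intro x hx
    calc x^(p-1) * x = x^(p-1) * x^(1:ℝ) := by rw [Real.rpow_one]
    _ = x^(p-1+1) := (Real.rpow_add hx _ _).symm
    _ = x^p := by ring_nf
  have hDj : ∀ b : Bool, HasDerivAt
      (fun s : ℝ => α j * (1 + (if b then (1:ℝ) else -1) * s) ^ p / (1 + s ^ p))
      (α j * (p * C b) / (1 + (u j)^p)^2) (u j) := by
    intro b
    have h1 : HasDerivAt (fun s : ℝ => 1 + (if b then (1:ℝ) else -1) * s)
        ((if b then (1:ℝ) else -1) * 1) (u j) :=
      ((hasDerivAt_id (u j)).const_mul _).const_add 1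
    have h2 := (h1.rpow_const (Or.inr hp1)).const_mul (α j)
    have h3 : HasDerivAt (fun s : ℝ => 1 + s ^ p) (1 * p * (u j)^(p-1)) (u j) :=
      ((hasDerivAt_id (u j)).rpow_const (Or.inl (ne_of_gt ht0))).const_add 1
    have h6 := h2.div h3 (ne_of_gt hden0)
    refine h6.congr_deriv ?_
    cases b
    · simp only [hC_def]
      norm_num
      rw [show (1 + -(u j)) = 1 - u j by ring,
        ← hkeyx (1 - u j) (by linarith), ← hkeyx (u j) ht0]
      ring
    · simp only [hC_def]
      norm_num
      rw [← hkeyx (1 + u j) (by linarith), ← hkeyx (u j) ht0]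
      ring
  have hinner : ∀ ε : Fin n → Bool, HasDerivAt
      (fun s : ℝ => ∑ i, α i * (1 + (if ε i then (1:ℝ) else -1) * Function.update u j s i) ^ p
        / (1 + Function.update u j s i ^ p))
      (α j * (p * C (ε j)) / (1 + (u j)^p)^2) (u j) := by
    intro ε
    have hs : HasDerivAt
        (fun s : ℝ => ∑ i, α i * (1 + (if ε i then (1:ℝ) else -1) * Function.update u j s i) ^ p
          / (1 + Function.update u j s i ^ p))
        (∑ i, if i = j then α j * (p * C (ε j)) / (1 + (u j)^p)^2 else 0) (u j) := by
      apply HasDerivAt.fun_sum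
      intro i _
      by_cases hij : i = j
      · subst hij
        simp only [Function.update_self, if_pos rfl]
        exact hDj (ε i)
      · simp only [Function.update_of_ne hij, if_neg hij]
        exact hasDerivAt_const _ _
    have he : (∑ i : Fin n, if i = j then α j * (p * C (ε j)) / (1 + (u j)^p)^2 else 0)
        = α j * (p * C (ε j)) / (1 + (u j)^p)^2 := by
      rw [Finset.sum_ite_eq' univ j (fun _ => α j * (p * C (ε j)) / (1 + (u j)^p)^2)]
      simp
    rwa [he] at hs
  -- positivity of inner sums at the point
  have hTpos : ∀ ε : Fin n → Bool,
      0 < ∑ i, α i * (1 + (if ε i then (1:ℝ) else -1) * u i) ^ p / (1 + u i ^ p) := by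
    intro ε
    apply Finset.sum_pos' (fun i _ => htermnn i (ε i))
    refine ⟨j, Finset.mem_univ j, ?_⟩
    have hbase : 0 < 1 + (if ε j then (1:ℝ) else -1) * u j := by
      cases (ε j) <;> simp <;> linarith
    exact div_pos (mul_pos hαj0 (Real.rpow_pos_of_pos hbase p)) hden0
  have houter : ∀ ε : Fin n → Bool, HasDerivAt
      (fun s : ℝ => (∑ i, α i * (1 + (if ε i then (1:ℝ) else -1) * Function.update u j s i) ^ p
        / (1 + Function.update u j s i ^ p)) ^ (1/p))
      ((α j * (p * C (ε j)) / (1 + (u j)^p)^2) * (1/p)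
        * (∑ i, α i * (1 + (if ε i then (1:ℝ) else -1) * u i) ^ p / (1 + u i ^ p)) ^ (1/p-1))
      (u j) := by
    intro ε
    have h := (hinner ε).rpow_const (p := 1/p) (Or.inl (by rw [hupd]; exact (hTpos ε).ne'))
    rw [hupd] at h
    exact h
  have Hphi : HasDerivAt (fun s : ℝ => phi p α (Function.update u j s))
      ((2:ℝ)^(-(n:ℝ)) * ∑ ε : Fin n → Bool,
        (α j * (p * C (ε j)) / (1 + (u j)^p)^2) * (1/p)
        * (∑ i, α i * (1 + (if ε i then (1:ℝ) else -1) * u i) ^ p / (1 + u i ^ p)) ^ (1/p-1))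
      (u j) :=
    HasDerivAt.const_mul ((2:ℝ)^(-(n:ℝ))) (HasDerivAt.fun_sum (fun ε _ => houter ε))
  rw [Hphi.deriv]
  -- positivity of the derivative value
  have hpairpos : ∀ ε : Fin n → Bool,
      0 < C (Function.update ε j true j) *
          (∑ i, α i * (1 + (if Function.update ε j true i then (1:ℝ) else -1) * u i) ^ p
            / (1 + u i ^ p)) ^ (1/p-1)
        + C (Function.update ε j false j) *
          (∑ i, α i * (1 + (if Function.update ε j false i then (1:ℝ) else -1) * u i) ^ p
            / (1 + u i ^ p)) ^ (1/p-1) := by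
    intro ε
    have e1 : Function.update ε j true j = true := Function.update_self j true ε
    have e2 : Function.update ε j false j = false := Function.update_self j false ε
    have hsplit : ∀ b : Bool,
        (∑ i, α i * (1 + (if Function.update ε j b i then (1:ℝ) else -1) * u i) ^ p
          / (1 + u i ^ p))
        = α j * (1 + (if b then (1:ℝ) else -1) * u j) ^ p / (1 + (u j) ^ p)
          + ∑ i ∈ univ.erase j,
            α i * (1 + (if ε i then (1:ℝ) else -1) * u i) ^ p / (1 + u i ^ p) := by
      intro b
      rw [← Finset.add_sum_erase univ _ (Finset.mem_univ j)]
      congr 1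
      · rw [Function.update_self]
      · apply Finset.sum_congr rfl
        intro i hi
        rw [Function.update_of_ne (Finset.ne_of_mem_erase hi)]
    rw [e1, e2, hsplit true, hsplit false]
    have hAcore : (2:ℝ)^(-(p+4)) ≤ ∑ i ∈ univ.erase j,
        α i * (1 + (if ε i then (1:ℝ) else -1) * u i) ^ p / (1 + u i ^ p) := by
      rw [← hc₀_def]
      exact hc₀A ε
    have hsmcore : (2:ℝ)^(p+2) * (α j * (u j)^(p-2))
        < (2:ℝ)^(-(p+4)) * ((2:ℝ)^(min (p-2) 2⁻¹) - 1) := by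
      rw [← hc₀_def, ← hκ_def]
      exact hsm
    have hc := core p hp (u j)
      (∑ i ∈ univ.erase j, α i * (1 + (if ε i then (1:ℝ) else -1) * u i) ^ p / (1 + u i ^ p))
      (α j) ht0 ht1 hAcore hαj0 hαj1 hsmcore
    have hCt : C true = (1 + u j)^(p-1) * (1 - (u j)^(p-1)) := by simp [hC_def]
    have hCf : C false = -((1 - u j)^(p-1) * (1 + (u j)^(p-1))) := by simp [hC_def]
    rw [hCt, hCf]
    have ht' : (1 + (if true then (1:ℝ) else -1) * u j) = 1 + u j := by norm_num
    have hf' : (1 + (if false then (1:ℝ) else -1) * u j) = 1 - u j := by norm_num [sub_eq_add_neg]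
    rw [ht', hf']
    have er1 : α j * (1 + u j) ^ p / (1 + (u j) ^ p)
          + ∑ i ∈ univ.erase j, α i * (1 + (if ε i then (1:ℝ) else -1) * u i) ^ p / (1 + u i ^ p)
        = (∑ i ∈ univ.erase j, α i * (1 + (if ε i then (1:ℝ) else -1) * u i) ^ p / (1 + u i ^ p))
          + α j * ((1 + u j) ^ p / (1 + (u j) ^ p)) := by ring
    have er2 : α j * (1 - u j) ^ p / (1 + (u j) ^ p)
          + ∑ i ∈ univ.erase j, α i * (1 + (if ε i then (1:ℝ) else -1) * u i) ^ p / (1 + u i ^ p)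
        = (∑ i ∈ univ.erase j, α i * (1 + (if ε i then (1:ℝ) else -1) * u i) ^ p / (1 + u i ^ p))
          + α j * ((1 - u j) ^ p / (1 + (u j) ^ p)) := by ring
    rw [er1, er2]
    linarith [hc]
  have hsumpos : 0 < ∑ ε : Fin n → Bool, C (ε j) *
      (∑ i, α i * (1 + (if ε i then (1:ℝ) else -1) * u i) ^ p / (1 + u i ^ p)) ^ (1/p-1) := by
    have hpair := pair_sum (fun ε : Fin n → Bool => C (ε j) *
      (∑ i, α i * (1 + (if ε i then (1:ℝ) else -1) * u i) ^ p / (1 + u i ^ p)) ^ (1/p-1)) j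
    have hrhs : 0 < ∑ ε : Fin n → Bool,
        (C (Function.update ε j true j) *
          (∑ i, α i * (1 + (if Function.update ε j true i then (1:ℝ) else -1) * u i) ^ p
            / (1 + u i ^ p)) ^ (1/p-1)
        + C (Function.update ε j false j) *
          (∑ i, α i * (1 + (if Function.update ε j false i then (1:ℝ) else -1) * u i) ^ p
            / (1 + u i ^ p)) ^ (1/p-1)) :=
      Finset.sum_pos (fun ε _ => hpairpos ε) Finset.univ_nonempty
    rw [← hpair] at hrhs
    linarith
  have hfactor : (∑ ε : Fin n → Bool,
        (α j * (p * C (ε j)) / (1 + (u j)^p)^2) * (1/p)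
        * (∑ i, α i * (1 + (if ε i then (1:ℝ) else -1) * u i) ^ p / (1 + u i ^ p)) ^ (1/p-1))
      = (α j / (1 + (u j)^p)^2) * ∑ ε : Fin n → Bool, C (ε j) *
        (∑ i, α i * (1 + (if ε i then (1:ℝ) else -1) * u i) ^ p / (1 + u i ^ p)) ^ (1/p-1) := by
    rw [Finset.mul_sum]
    refine Finset.sum_congr rfl fun ε _ => ?_
    field_simp
  rw [hfactor]
  exact mul_pos (Real.rpow_pos_of_pos two_pos _)
    (mul_pos (div_pos hαj0 (pow_pos hden0 2)) hsumpos)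
end

section
/- Let p > 2 be a real number. For all u ∈ [0,1], one has (1+u)^p + (1−u)^p ≥ 2 + (2^p − 2)·u^p. -/
/-!
Dividing by `u ^ p` and putting `t = 1 / u ≥ 1`, the inequality says that
`g t = (t + 1) ^ p + (t - 1) ^ p - 2 * t ^ p` satisfies `g 1 ≤ g t`. And `g` is nondecreasing on
`[1, ∞)`: its derivative is `p` times the second difference of `x ^ (p - 1)`, which is
nonnegative because `x ^ (p - 1)` is convex for `p ≥ 2`.
-/

open Real Set

theorem two_mul_rpow_le_add_rpow_add_rpow_sub {q t : ℝ} (hq : 1 ≤ q) (ht : 1 ≤ t) :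
    2 * t ^ q ≤ (t + 1) ^ q + (t - 1) ^ q := by
  have h := (convexOn_rpow hq).2 (mem_Ici.2 (by linarith : (0:ℝ) ≤ t + 1))
    (mem_Ici.2 (by linarith : (0:ℝ) ≤ t - 1)) (by norm_num : (0:ℝ) ≤ 1 / 2)
    (by norm_num : (0:ℝ) ≤ 1 / 2) (by norm_num)
  simp only [smul_eq_mul] at h
  rw [show 1 / 2 * (t + 1) + 1 / 2 * (t - 1) = t by ring] at h
  linarith

theorem monotoneOn_rpow_second_difference {p : ℝ} (hp : 2 ≤ p) :
    MonotoneOn (fun t : ℝ => (t + 1) ^ p + (t - 1) ^ p - 2 * t ^ p) (Ici 1) := by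
  have hp1 : 1 ≤ p := by linarith
  have hderiv : ∀ t : ℝ, HasDerivAt (fun t : ℝ => (t + 1) ^ p + (t - 1) ^ p - 2 * t ^ p)
      (p * ((t + 1) ^ (p - 1) + (t - 1) ^ (p - 1) - 2 * t ^ (p - 1))) t := fun t => by
    have h := ((((hasDerivAt_id t).add_const 1).rpow_const (Or.inr hp1)).add
      (((hasDerivAt_id t).sub_const 1).rpow_const (Or.inr hp1))).sub
      ((hasDerivAt_rpow_const (x := t) (Or.inr hp1)).const_mul 2)
    exact h.congr_deriv (by simp only [id]; ring)
  refine monotoneOn_of_deriv_nonneg (convex_Ici 1)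
    (HasDerivAt.continuousOn fun t _ => hderiv t)
    (fun t _ => (hderiv t).differentiableAt.differentiableWithinAt) fun t ht => ?_
  rw [interior_Ici] at ht
  rw [(hderiv t).deriv]
  have hconv := two_mul_rpow_le_add_rpow_add_rpow_sub (by linarith : 1 ≤ p - 1) ht.le
  exact mul_nonneg (by linarith) (by linarith)

theorem two_mul_rpow_add_le_rpow_add_add_rpow_sub {p a b : ℝ} (hp : 2 ≤ p) (hb : 0 ≤ b)
    (hba : b ≤ a) : 2 * a ^ p + (2 ^ p - 2) * b ^ p ≤ (a + b) ^ p + (a - b) ^ p := by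
  have hp0 : p ≠ 0 := by linarith
  rcases hb.eq_or_lt with rfl | hb
  · simp [zero_rpow hp0, two_mul]
  set t := a / b
  have ht : 1 ≤ t := (one_le_div hb).2 hba
  have hmono := monotoneOn_rpow_second_difference hp self_mem_Ici (mem_Ici.2 ht) ht
  norm_num [zero_rpow hp0] at hmono
  have ha : a = b * t := (mul_div_cancel₀ a hb.ne').symm
  have hbp : 0 ≤ b ^ p := by positivity
  rw [ha, show b * t + b = b * (t + 1) by ring, show b * t - b = b * (t - 1) by ring,
    mul_rpow hb.le (by linarith), mul_rpow hb.le (by linarith), mul_rpow hb.le (by linarith)]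
  nlinarith

theorem stmt_13 (p : ℝ) (hp : 2 < p) (u : ℝ) (hu : u ∈ Set.Icc (0:ℝ) 1) :
    (1 + u) ^ p + (1 - u) ^ p ≥ 2 + ((2:ℝ) ^ p - 2) * u ^ p := by
  simpa using two_mul_rpow_add_le_rpow_add_add_rpow_sub hp.le hu.1 hu.2
end

section
/- Let p > 2 be a real number, n a positive integer, and let α_1,…,α_n be real numbers with α_i ≥ 1/(2n) for all i and ∑_{i=1}^n α_i = 1. Let u_1,…,u_n ∈ [0,1] and suppose the number of indices i with u_i > 1/2 is strictly greater than n/2. Then ∑_{i=1}^n α_i·((1+u_i)^p + (1−u_i)^p)/(2(1+u_i^p)) ≥ 1 + (2^{p−2} − 1)·2^{−p−2}. -/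
/-!
With `g(u) = (1 + u)^p + (1 - u)^p - 2 u^p`, the summand's ratio is `1 + (g(u) - 2) / (2 (1 + u^p))`.
For `p ≥ 2` the derivative of `g` is nonnegative on `[0, 1]` by superadditivity of `t ↦ t^(p-1)`,
so `g` is increasing: `g ≥ g(0) = 2` makes every ratio at least `1`, and for `u > 1/2`
the bound `g(u) - 2 ≥ g(1/2) - 2 ≥ 1 - 4 (1/2)^p` makes the ratio at least `1 + c` with
`c = 1/4 - (1/2)^p`. More than `n/2` indices carry weight at least `1/(2n)` each and gain `c`,
so the weighted sum exceeds `1 + c/4`, which is the claimed bound.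
-/

open Real Set Finset

noncomputable def clarksonGap (p u : ℝ) : ℝ := (1 + u) ^ p + (1 - u) ^ p - 2 * u ^ p

noncomputable def clarksonRatio (p u : ℝ) : ℝ := ((1 + u) ^ p + (1 - u) ^ p) / (2 * (1 + u ^ p))

lemma hasDerivAt_clarksonGap {p : ℝ} (hp : 1 ≤ p) (x : ℝ) :
    HasDerivAt (clarksonGap p)
      (p * ((1 + x) ^ (p - 1) - (1 - x) ^ (p - 1) - 2 * x ^ (p - 1))) x := by
  have hplus := ((hasDerivAt_id x).const_add 1).rpow_const (p := p) (Or.inr hp)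
  have hminus := ((hasDerivAt_id x).const_sub 1).rpow_const (p := p) (Or.inr hp)
  have hpow := (hasDerivAt_rpow_const (x := x) (Or.inr hp)).const_mul 2
  exact ((hplus.add hminus).sub hpow).congr_deriv (by simp only [id]; ring)

lemma two_mul_rpow_add_one_sub_rpow_le {q x : ℝ} (hq : 1 ≤ q) (hx : 0 ≤ x) (hx1 : x ≤ 1) :
    2 * x ^ q + (1 - x) ^ q ≤ (1 + x) ^ q := by
  have h2 : (2 : ℝ) ≤ 2 ^ q := by
    simpa using rpow_le_rpow_of_exponent_le (by norm_num : (1 : ℝ) ≤ 2) hq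
  calc 2 * x ^ q + (1 - x) ^ q ≤ (2 * x) ^ q + (1 - x) ^ q := by
        rw [mul_rpow zero_le_two hx]; gcongr
    _ ≤ (2 * x + (1 - x)) ^ q := add_rpow_le_rpow_add (by linarith) (by linarith) hq
    _ = (1 + x) ^ q := by ring_nf

lemma monotoneOn_clarksonGap {p : ℝ} (hp : 2 ≤ p) : MonotoneOn (clarksonGap p) (Icc 0 1) := by
  have hderiv := hasDerivAt_clarksonGap (by linarith : 1 ≤ p)
  refine monotoneOn_of_deriv_nonneg (convex_Icc 0 1)
    (fun x _ => (hderiv x).continuousAt.continuousWithinAt)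
    (fun x _ => (hderiv x).differentiableAt.differentiableWithinAt) fun x hx => ?_
  rw [interior_Icc] at hx
  rw [(hderiv x).deriv]
  have := two_mul_rpow_add_one_sub_rpow_le (by linarith : 1 ≤ p - 1) hx.1.le hx.2.le
  exact mul_nonneg (by linarith) (by linarith)

lemma clarksonGap_zero {p : ℝ} (hp : 0 < p) : clarksonGap p 0 = 2 := by
  simp [clarksonGap, zero_rpow hp.ne']
  norm_num

lemma clarksonGap_half (p : ℝ) : clarksonGap p (1 / 2) = (3 / 2) ^ p - (1 / 2) ^ p := by
  norm_num [clarksonGap]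
  ring

lemma one_add_mul_log_le_rpow {a : ℝ} (ha : 0 < a) (s : ℝ) : 1 + s * log a ≤ a ^ s := by
  rw [rpow_def_of_pos ha, mul_comm]
  exact add_one_le_exp _ |>.trans_eq' (add_comm _ _)

lemma three_le_three_halves_rpow_add_three_mul_half_rpow {p : ℝ} (hp : 2 ≤ p) :
    3 ≤ (3 / 2 : ℝ) ^ p + 3 * (1 / 2 : ℝ) ^ p := by
  have hsplit (a : ℝ) (ha : 0 < a) : a ^ p = a ^ 2 * a ^ (p - 2) := by
    rw [← rpow_natCast, ← rpow_add ha]; norm_num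
  have h₁ := one_add_mul_log_le_rpow (by norm_num : (0 : ℝ) < 3 / 2) (p - 2)
  have h₂ := one_add_mul_log_le_rpow (by norm_num : (0 : ℝ) < 1 / 2) (p - 2)
  -- the tangent line at p = 2 has slope (3/4) log (27/16) > 0
  have hlog : 0 ≤ 3 * log (3 / 2) + log (1 / 2) := by
    rw [← Nat.cast_ofNat, ← log_pow, ← log_mul (by norm_num) (by norm_num)]
    exact log_nonneg (by norm_num)
  rw [hsplit _ (by norm_num), hsplit _ (by norm_num)]
  nlinarith [mul_nonneg (by linarith : 0 ≤ p - 2) hlog]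

lemma half_rpow_le_quarter {p : ℝ} (hp : 2 ≤ p) : (1 / 2 : ℝ) ^ p ≤ 1 / 4 :=
  calc (1 / 2 : ℝ) ^ p ≤ (1 / 2) ^ (2 : ℝ) := rpow_le_rpow_of_exponent_ge (by norm_num) (by norm_num) hp
    _ = 1 / 4 := by norm_num

lemma one_le_clarksonRatio {p u : ℝ} (hp : 2 ≤ p) (hu : u ∈ Icc (0 : ℝ) 1) :
    1 ≤ clarksonRatio p u := by
  have hgap := monotoneOn_clarksonGap hp (left_mem_Icc.2 zero_le_one) hu hu.1
  rw [clarksonGap_zero (by linarith)] at hgap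
  have hup : 0 ≤ u ^ p := rpow_nonneg hu.1 p
  rw [clarksonRatio, le_div_iff₀ (by positivity)]
  unfold clarksonGap at hgap
  linarith

lemma one_add_le_clarksonRatio {p u : ℝ} (hp : 2 ≤ p) (hu : 1 / 2 < u) (hu1 : u ≤ 1) :
    1 + (1 / 4 - (1 / 2) ^ p) ≤ clarksonRatio p u := by
  have hgap := monotoneOn_clarksonGap hp ⟨by norm_num, by norm_num⟩ ⟨by linarith, hu1⟩ hu.le
  rw [clarksonGap_half] at hgap
  have h3 := three_le_three_halves_rpow_add_three_mul_half_rpow hp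
  have hhalf := half_rpow_le_quarter hp
  have hup : 0 ≤ u ^ p := rpow_nonneg (by linarith) p
  have hup1 : u ^ p ≤ 1 := rpow_le_one (by linarith) hu1 (by linarith)
  rw [clarksonRatio, le_div_iff₀ (by positivity)]
  unfold clarksonGap at hgap
  nlinarith

lemma one_add_card_mul_le_sum_mul {ι : Type*} [Fintype ι] (S : Finset ι) {α f : ι → ℝ} {a c : ℝ}
    (ha : 0 ≤ a) (hα : ∀ i, a ≤ α i) (hsum : ∑ i, α i = 1) (hc : 0 ≤ c)
    (hf : ∀ i, 1 ≤ f i) (hS : ∀ i ∈ S, 1 + c ≤ f i) :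
    1 + #S * a * c ≤ ∑ i, α i * f i := by
  have hα₀ (i : ι) : 0 ≤ α i := ha.trans (hα i)
  calc 1 + #S * a * c = 1 + ∑ i ∈ S, a * c := by rw [sum_const, nsmul_eq_mul, mul_assoc]
    _ ≤ 1 + ∑ i ∈ S, α i * (f i - 1) := by
        gcongr 1 + ?_
        exact sum_le_sum fun i hi => mul_le_mul (hα i) (by linarith [hS i hi]) hc (hα₀ i)
    _ ≤ 1 + ∑ i, α i * (f i - 1) := by
        gcongr 1 + ?_
        exact sum_le_sum_of_subset_of_nonneg (subset_univ S)
          fun i _ _ => mul_nonneg (hα₀ i) (sub_nonneg.2 (hf i))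
    _ = ∑ i, α i * f i := by simp only [mul_sub, mul_one, sum_sub_distrib, hsum]; ring

theorem stmt_16 (p : ℝ) (hp : 2 < p) (n : ℕ) (hn : 0 < n) (α u : Fin n → ℝ)
    (hα : ∀ i, 1 / (2 * (n : ℝ)) ≤ α i) (hsum : ∑ i, α i = 1)
    (hu : ∀ i, u i ∈ Set.Icc (0 : ℝ) 1)
    (hcard : (n : ℝ) / 2 < (Finset.univ.filter fun i => 1 / 2 < u i).card) :
    ∑ i, α i * (((1 + u i) ^ p + (1 - u i) ^ p) / (2 * (1 + u i ^ p))) ≥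
      1 + ((2:ℝ) ^ (p - 2) - 1) * (2:ℝ) ^ (-p - 2) := by
  set c : ℝ := 1 / 4 - (1 / 2) ^ p
  have hc : 0 ≤ c := sub_nonneg.2 (half_rpow_le_quarter hp.le)
  have hsum_ge := one_add_card_mul_le_sum_mul (univ.filter fun i => 1 / 2 < u i) (by positivity)
    hα hsum hc (fun i => one_le_clarksonRatio hp.le (hu i))
    fun i hi => one_add_le_clarksonRatio hp.le (mem_filter.1 hi).2 (hu i).2
  have hconst : ((2:ℝ) ^ (p - 2) - 1) * (2:ℝ) ^ (-p - 2) = c / 4 := by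
    have h2p : (0 : ℝ) < 2 ^ p := by positivity
    rw [rpow_sub two_pos, rpow_sub two_pos, rpow_neg zero_le_two]
    simp only [c, one_div, inv_rpow zero_le_two]
    field_simp
    norm_num
    ring
  have hnR : (0 : ℝ) < n := by exact_mod_cast hn
  have hcount : c / 4 ≤ #(univ.filter fun i => 1 / 2 < u i) * (1 / (2 * n)) * c :=
    calc c / 4 = n / 2 * (1 / (2 * n)) * c := by field_simp; ring
      _ ≤ _ := by gcongr
  rw [hconst, ge_iff_le]
  exact (add_le_add_right hcount 1).trans hsum_ge
end

section
/- Let p > 2 be a real number, let n ≥ 4 be an integer, let j ∈ {1,…,n}, and let α_1,…,α_n be real numbers with α_i ≥ 1/(2n) for all i. Let u_1,…,u_n ∈ [0,1] be such that the number of indices i with u_i > 1/2 is at most n/2, and let ε_1,…,ε_n ∈ {−1,+1}. Then ∑_{i≠j} α_i·(1+ε_i u_i)^p/(1+u_i^p) ≥ 1/(8 + 2^{p+3}). -/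
open Finset

/-! Every index `i ≠ j` with `u i ≤ 1/2` contributes at least
`α i / (2 ^ p + 1) ≥ 1 / (2n (2 ^ p + 1))`, since then `1 + ε i u i ≥ 1/2` and `u i ^ p ≤ 2 ^ (-p)`.
At most `n/2` indices have `u i > 1/2`, so for `n ≥ 4` at least `n/2 - 1 ≥ n/4` indices `i ≠ j`
contribute, and the sum is at least `1 / (8 (2 ^ p + 1))`. -/

lemma one_sub_le_one_add_mul {ε u r : ℝ} (hε : |ε| ≤ 1) (hu : |u| ≤ r) :
    1 - r ≤ 1 + ε * u := by
  have : |ε * u| ≤ r := by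
    rw [abs_mul]
    nlinarith [abs_nonneg ε, abs_nonneg u]
  linarith [neg_abs_le (ε * u)]

lemma one_div_two_rpow_add_one_le_rpow_div {p x u : ℝ} (hp : 0 ≤ p) (hx : 1 / 2 ≤ x)
    (hu₀ : 0 ≤ u) (hu : u ≤ 1 / 2) : 1 / (2 ^ p + 1) ≤ x ^ p / (1 + u ^ p) := by
  have hhalf : (1 / 2 : ℝ) ^ p = (2 ^ p)⁻¹ := by
    rw [one_div, Real.inv_rpow zero_le_two]
  have hx' : (1 / 2 : ℝ) ^ p ≤ x ^ p := Real.rpow_le_rpow (by norm_num) hx hp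
  have hu' : u ^ p ≤ (1 / 2 : ℝ) ^ p := Real.rpow_le_rpow hu₀ hu hp
  calc 1 / (2 ^ p + 1) = (1 / 2 : ℝ) ^ p / (1 + (1 / 2 : ℝ) ^ p) := by
        rw [hhalf]
        field_simp
    _ ≤ x ^ p / (1 + u ^ p) :=
        div_le_div₀ (by positivity) hx' (by positivity) (by linarith)

lemma mul_one_add_mul_rpow_div_nonneg {p a ε u : ℝ} (ha : 0 ≤ a) (hε : |ε| ≤ 1)
    (hu : u ∈ Set.Icc (0 : ℝ) 1) : 0 ≤ a * (1 + ε * u) ^ p / (1 + u ^ p) := by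
  have hx := one_sub_le_one_add_mul hε (abs_le.2 ⟨by linarith [hu.1], hu.2⟩)
  rw [sub_self] at hx
  have := Real.rpow_nonneg hu.1 p
  exact div_nonneg (mul_nonneg ha (Real.rpow_nonneg hx p)) (by positivity)

lemma mul_one_div_two_rpow_add_one_le {p a₀ a ε u : ℝ} (hp : 0 ≤ p) (ha₀ : 0 ≤ a₀)
    (ha : a₀ ≤ a) (hε : |ε| ≤ 1) (hu₀ : 0 ≤ u) (hu : u ≤ 1 / 2) :
    a₀ * (1 / (2 ^ p + 1)) ≤ a * (1 + ε * u) ^ p / (1 + u ^ p) := by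
  have hx := one_sub_le_one_add_mul hε (abs_le.2 ⟨by linarith, hu⟩)
  rw [show (1 : ℝ) - 1 / 2 = 1 / 2 by norm_num] at hx
  rw [mul_div_assoc]
  exact mul_le_mul ha (one_div_two_rpow_add_one_le_rpow_div hp hx hu₀ hu) (by positivity)
    (ha₀.trans ha)

lemma card_le_card_filter_add_card_erase_filter_not {ι : Type*} [Fintype ι] [DecidableEq ι]
    (P : ι → Prop) [DecidablePred P] (j : ι) :
    Fintype.card ι ≤ #(univ.filter P) + #((univ.erase j).filter fun i => ¬ P i) + 1 := by
  have hsplit := card_filter_add_card_filter_not (s := (univ : Finset ι)) P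
  have herase := pred_card_le_card_erase (s := univ.filter fun i => ¬ P i) (a := j)
  rw [filter_erase, card_univ] at *
  omega

lemma quarter_card_le_card_erase_filter_not {ι : Type*} [Fintype ι] [DecidableEq ι]
    (P : ι → Prop) [DecidablePred P] (j : ι) (hcard : 4 ≤ Fintype.card ι)
    (hP : (#(univ.filter P) : ℝ) ≤ Fintype.card ι / 2) :
    (Fintype.card ι : ℝ) / 4 ≤ #((univ.erase j).filter fun i => ¬ P i) := by
  have h := card_le_card_filter_add_card_erase_filter_not P j
  have h' : (Fintype.card ι : ℝ) ≤
      #(univ.filter P) + #((univ.erase j).filter fun i => ¬ P i) + 1 := by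
    exact_mod_cast h
  have h4 : (4 : ℝ) ≤ Fintype.card ι := by exact_mod_cast hcard
  linarith

lemma one_div_eight_add_two_rpow_add_three (p : ℝ) {n : ℝ} (hn : n ≠ 0) :
    1 / (8 + (2 : ℝ) ^ (p + 3)) = n / 4 * (1 / (2 * n) * (1 / (2 ^ p + 1))) := by
  rw [Real.rpow_add two_pos, show (2 : ℝ) ^ (3 : ℝ) = 8 by norm_num]
  field_simp
  ring

theorem stmt_17 (p : ℝ) (hp : 2 < p) (n : ℕ) (hn : 4 ≤ n) (j : Fin n)
    (α u : Fin n → ℝ) (hα : ∀ i, 1 / (2 * (n : ℝ)) ≤ α i)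
    (hu : ∀ i, u i ∈ Set.Icc (0 : ℝ) 1)
    (hcard : ((Finset.univ.filter fun i => 1 / 2 < u i).card : ℝ) ≤ (n : ℝ) / 2)
    (ε : Fin n → ℝ) (hε : ∀ i, ε i = 1 ∨ ε i = -1) :
    ∑ i ∈ Finset.univ.erase j, α i * (1 + ε i * u i) ^ p / (1 + u i ^ p) ≥
      1 / (8 + (2:ℝ) ^ (p + 3)) := by
  set f := fun i => α i * (1 + ε i * u i) ^ p / (1 + u i ^ p)
  set b := 1 / (2 * (n : ℝ)) * (1 / (2 ^ p + 1))
  set G := (univ.erase j).filter fun i => ¬ 1 / 2 < u i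
  have hε₁ i : |ε i| ≤ 1 := by rcases hε i with h | h <;> simp [h]
  have hn₀ : (0 : ℝ) ≤ 1 / (2 * n) := by positivity
  have hf_ge i (hi : i ∈ G) : b ≤ f i :=
    mul_one_div_two_rpow_add_one_le (by linarith) hn₀ (hα i) (hε₁ i) (hu i).1
      (not_lt.1 (mem_filter.1 hi).2)
  have hG : (n : ℝ) / 4 ≤ #G := by
    have h := quarter_card_le_card_erase_filter_not (fun i => 1 / 2 < u i) j
      (by rwa [Fintype.card_fin]) (by rwa [Fintype.card_fin])
    rwa [Fintype.card_fin] at h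
  calc 1 / (8 + (2:ℝ) ^ (p + 3)) = n / 4 * b :=
        one_div_eight_add_two_rpow_add_three p (by positivity)
    _ ≤ #G * b := by gcongr
    _ ≤ ∑ i ∈ G, f i := by simpa using card_nsmul_le_sum G f b hf_ge
    _ ≤ ∑ i ∈ univ.erase j, f i :=
        sum_le_sum_of_subset_of_nonneg (filter_subset _ _) fun i _ _ =>
          mul_one_add_mul_rpow_div_nonneg (hn₀.trans (hα i)) (hε₁ i) (hu i)
end

section
/- Let p > 2 be a real number. Then the function g(u) := (1+u)/(1+u^p)^{1/p} is nondecreasing and concave on the interval [0,1]. -/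
/-!
Writing `A = 1 + u ^ p`, the quotient rule and `A = 1 + u * u ^ (p - 1)` give
`g'(u) = (1 - u ^ (p - 1)) * A ^ (-1/p - 1)`. On `[0, 1]` both factors are nonnegative and
nonincreasing, so `g'` is nonnegative and nonincreasing: `g` is monotone and concave.
-/

open Real Set

section

variable {D : Set ℝ} {f f' : ℝ → ℝ}

lemma monotoneOn_of_hasDerivAt_nonneg (hD : Convex ℝ D) (hf : ∀ x ∈ D, HasDerivAt f (f' x) x)
    (hf'₀ : ∀ x ∈ D, 0 ≤ f' x) : MonotoneOn f D :=
  monotoneOn_of_hasDerivWithinAt_nonneg hD (fun x hx ↦ (hf x hx).continuousAt.continuousWithinAt)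
    (fun x hx ↦ (hf x (interior_subset hx)).hasDerivWithinAt)
    (fun x hx ↦ hf'₀ x (interior_subset hx))

lemma AntitoneOn.concaveOn_of_hasDerivAt (hD : Convex ℝ D) (hf : ∀ x ∈ D, HasDerivAt f (f' x) x)
    (hf' : AntitoneOn f' D) : ConcaveOn ℝ D f := by
  refine AntitoneOn.concaveOn_of_deriv hD
    (fun x hx ↦ (hf x hx).continuousAt.continuousWithinAt)
    (fun x hx ↦ (hf x (interior_subset hx)).differentiableAt.differentiableWithinAt) ?_
  intro x hx y hy hxy
  rw [(hf x (interior_subset hx)).deriv, (hf y (interior_subset hy)).deriv]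
  exact hf' (interior_subset hx) (interior_subset hy) hxy

end

section

variable {p : ℝ}

lemma hasDerivAt_one_add_div_rpow_one_div (hp : 1 ≤ p) {u : ℝ} (hu : 0 ≤ u) :
    HasDerivAt (fun u : ℝ => (1 + u) / (1 + u ^ p) ^ (1 / p))
      ((1 - u ^ (p - 1)) * (1 + u ^ p) ^ (-(1 / p) - 1)) u := by
  have hp0 : p ≠ 0 := by positivity
  have hA : 0 < 1 + u ^ p := by positivity
  have hC : 0 < (1 + u ^ p) ^ (1 / p) := by positivity
  refine (((hasDerivAt_id u).const_add 1).div
    (((hasDerivAt_rpow_const (Or.inr hp)).const_add 1).rpow_const (p := 1 / p) (Or.inl hA.ne'))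
    hC.ne').congr_deriv ?_
  set B := (1 + u ^ p) ^ (1 / p - 1)
  have hCB : (1 + u ^ p) ^ (1 / p) = (1 + u ^ p) * B := by
    rw [← rpow_one_add' hA.le (by simpa using hp0)]; ring_nf
  have hEB : (1 + u ^ p) ^ (-(1 / p) - 1) * ((1 + u ^ p) ^ (1 / p)) ^ 2 = B := by
    rw [sq, ← rpow_add hA, ← rpow_add hA]; congr 1; ring
  have hup : u ^ p = u * u ^ (p - 1) := by
    rw [← rpow_one_add' hu (by simpa using hp0)]; ring_nf
  have hcancel : p * u ^ (p - 1) * (1 / p) = u ^ (p - 1) := by field_simp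
  rw [id_eq, hcancel, div_eq_iff (by positivity)]
  linear_combination -(1 - u ^ (p - 1)) * hEB + hCB + B * hup

lemma one_sub_rpow_mul_rpow_nonneg (hp : 1 ≤ p) {u : ℝ} (hu : u ∈ Icc (0 : ℝ) 1) :
    0 ≤ (1 - u ^ (p - 1)) * (1 + u ^ p) ^ (-(1 / p) - 1) := by
  have hu0 : 0 ≤ u := hu.1
  exact mul_nonneg (sub_nonneg.2 (rpow_le_one hu0 hu.2 (by linarith))) (by positivity)

lemma antitoneOn_one_sub_rpow_mul_rpow (hp : 1 ≤ p) :
    AntitoneOn (fun u : ℝ => (1 - u ^ (p - 1)) * (1 + u ^ p) ^ (-(1 / p) - 1)) (Icc 0 1) := by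
  intro x hx y hy hxy
  have hp0 : 0 < p := by linarith
  have hx0 : 0 ≤ x := hx.1
  have hy0 : 0 ≤ y := hy.1
  have hfirst : 1 - y ^ (p - 1) ≤ 1 - x ^ (p - 1) := by gcongr
  have hsecond : (1 + y ^ p) ^ (-(1 / p) - 1) ≤ (1 + x ^ p) ^ (-(1 / p) - 1) := by
    refine rpow_le_rpow_of_nonpos (by positivity) (by gcongr) ?_
    have : 0 < 1 / p := by positivity
    linarith
  exact mul_le_mul hfirst hsecond (by positivity)
    (sub_nonneg.2 (rpow_le_one hx0 hx.2 (by linarith)))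

end

theorem stmt_19 (p : ℝ) (hp : 2 < p) :
    MonotoneOn (fun u : ℝ => (1 + u) / (1 + u ^ p) ^ (1 / p)) (Set.Icc 0 1) ∧
      ConcaveOn ℝ (Set.Icc 0 1) (fun u : ℝ => (1 + u) / (1 + u ^ p) ^ (1 / p)) := by
  have hp1 : 1 ≤ p := by linarith
  have hderiv (u : ℝ) (hu : u ∈ Icc (0 : ℝ) 1) :=
    hasDerivAt_one_add_div_rpow_one_div hp1 hu.1
  exact ⟨monotoneOn_of_hasDerivAt_nonneg (convex_Icc 0 1) hderiv
      (fun _ hu ↦ one_sub_rpow_mul_rpow_nonneg hp1 hu),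
    (antitoneOn_one_sub_rpow_mul_rpow hp1).concaveOn_of_hasDerivAt (convex_Icc 0 1) hderiv⟩
end
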